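/- arXiv:2510.12008 — 9 statements merged into one kernel-verified Lean document; each statement's English description precedes it below -/
import Mathlib

section
/- Let F : F_2^n → F_2^n be a function and for a ∈ F_2^n define the difference function D_{F,a}(x) = F(x) + F(x+a). Suppose F is quadratic and APN, so that for every nonzero a the image of D_{F,a} is an affine hyperplane. For nonzero b, let T_b = {a : image(D_{F,a}) = H_b} ∪ {0}, where H_b = {x : ⟨b,x⟩ = 0}. Then T_b is an F_2-linear subspace of F_2^n. -/
open Finset

/-- `Vec n` is the vector space `F_2^n`. -/
abbrev Vec (n : ℕ) := Fin n → ZMod 2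

/-- The standard dot product on `F_2^n`. -/
def dotp {n : ℕ} (a b : Vec n) : ZMod 2 := ∑ i, a i * b i

/-- The difference (derivative) function `D_{F,a}(x) = F(x) + F(x+a)`. -/
def Dder {n : ℕ} (F : Vec n → Vec n) (a x : Vec n) : Vec n := F x + F (x + a)

/-- The linear hyperplane `H_b = {x : ⟨b,x⟩ = 0}`. -/
def Hyp {n : ℕ} (b : Vec n) : Set (Vec n) := {x | dotp b x = 0}

/-- The affine hyperplane `H̄_b = {x : ⟨b,x⟩ = 1}`. -/
def HypBar {n : ℕ} (b : Vec n) : Set (Vec n) := {x | dotp b x = 1}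

/-- `T_b = {a : image(D_{F,a}) = H_b} ∪ {0}`. -/
def Tset {n : ℕ} (F : Vec n → Vec n) (b : Vec n) : Set (Vec n) :=
  {a | Set.range (Dder F a) = Hyp b} ∪ {0}

/-- `T̄_b = {a : image(D_{F,a}) = H̄_b}`. -/
def TsetBar {n : ℕ} (F : Vec n → Vec n) (b : Vec n) : Set (Vec n) :=
  {a | Set.range (Dder F a) = HypBar b}

/-- `V_b = T_b ∪ T̄_b`. -/
def Vset {n : ℕ} (F : Vec n → Vec n) (b : Vec n) : Set (Vec n) := Tset F b ∪ TsetBar F b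

/-- `F` is quadratic: all second derivatives are constant (algebraic degree ≤ 2). -/
def IsQuadratic {n m : ℕ} (F : Vec n → Vec m) : Prop :=
  ∀ a₁ a₂ : Vec n, ∃ c : Vec m, ∀ x, F (x + a₁ + a₂) + F (x + a₁) + F (x + a₂) + F x = c

/-- `F` is APN: every equation `F(x) + F(x+a) = b`, `a ≠ 0`, has at most 2 solutions. -/
def IsAPN {n : ℕ} (F : Vec n → Vec n) : Prop :=
  ∀ a : Vec n, a ≠ 0 → ∀ b : Vec n, Nat.card {x : Vec n // F x + F (x + a) = b} ≤ 2

/-- The Walsh transform `W_F(b,a) = Σ_x (-1)^{⟨b,F(x)⟩ + ⟨a,x⟩}`. -/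
def Walsh {n m : ℕ} (F : Vec n → Vec m) (b : Vec m) (a : Vec n) : ℤ :=
  ∑ x : Vec n, (-1 : ℤ) ^ ((dotp b (F x) + dotp a x).val)

/-- The component `F_b` is bent: `|W_F(b,a)| = 2^{n/2}` for all `a`. -/
def IsBent {n m : ℕ} (F : Vec n → Vec m) (b : Vec m) : Prop :=
  ∀ a : Vec n, (Walsh F b a) ^ 2 = 2 ^ n

/-- The set `N_F` of non-trivial non-bent components of `F`. -/
def NF {n m : ℕ} (F : Vec n → Vec m) : Set (Vec m) := {b | b ≠ 0 ∧ ¬ IsBent F b}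

/-- A vector space partition of `F_q^n`: a collection of nonzero subspaces such that
every nonzero vector lies in exactly one member. -/
def IsVSP {K : Type} [Field K] {n : ℕ} (𝒱 : Finset (Submodule K (Fin n → K))) : Prop :=
  (∀ S ∈ 𝒱, S ≠ ⊥) ∧
  ∀ x : Fin n → K, x ≠ 0 → ∃! S : Submodule K (Fin n → K), S ∈ 𝒱 ∧ x ∈ S

/-- A blocking set of `PG(m,2)` (identified with `F_2^{m+1} \ {0}`) with respect to
`k`-spaces (nonzero parts of `(k+1)`-dimensional subspaces). -/
def PGBlocking (m k : ℕ) (B : Set (Fin (m + 1) → ZMod 2)) : Prop :=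
  0 ∉ B ∧ ∀ S : Submodule (ZMod 2) (Fin (m + 1) → ZMod 2),
    Module.finrank (ZMod 2) S = k + 1 → ∃ x ∈ B, x ∈ S

/-- `F_b` has amplitude `2^{(n+k)/2}`. -/
def HasAmp {n m : ℕ} (F : Vec n → Vec m) (b : Vec m) (k : ℕ) : Prop :=
  (∀ a, (Walsh F b a) ^ 2 = 0 ∨ (Walsh F b a) ^ 2 = 2 ^ (n + k)) ∧
  ∃ a, (Walsh F b a) ^ 2 = 2 ^ (n + k)


section Aux
variable {n : ℕ}

private lemma zmod2_cases' (c : ZMod 2) : c = 0 ∨ c = 1 := by revert c; decide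

private lemma dotp_add' (b u v : Vec n) : dotp b (u + v) = dotp b u + dotp b v := by
  simp [dotp, mul_add, Finset.sum_add_distrib]

private lemma zmod2_vec_add_self (v : Vec n) : v + v = 0 := by
  funext j
  show v j + v j = 0
  generalize v j = c; revert c; decide

private lemma card_hyp' (b : Vec n) (hb : b ≠ 0) :
    2 * (univ.filter (fun x : Vec n => dotp b x = 0)).card = 2 ^ n := by
  obtain ⟨i, hi⟩ : ∃ i, b i ≠ 0 := by
    by_contra h; push_neg at h; exact hb (funext fun i => h i)
  have hbi : b i = 1 := (zmod2_cases' (b i)).resolve_left hi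
  set v : Vec n := Pi.single i 1 with hv
  have hdv : dotp b v = 1 := by
    simp [dotp, hv, Pi.single_apply, mul_ite, Finset.sum_ite_eq', hbi]
  have key : (univ.filter (fun x : Vec n => dotp b x = 0)).card
      = (univ.filter (fun x : Vec n => ¬ dotp b x = 0)).card := by
    apply Finset.card_bij (fun x _ => x + v)
    · intro x hx
      simp only [Finset.mem_filter, Finset.mem_univ, true_and] at hx ⊢
      rw [dotp_add', hx, hdv]; decide
    · intro x hx y hy h
      have := congrArg (· + v) h
      simpa [add_assoc, zmod2_vec_add_self v] using this
    · intro y hy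
      refine ⟨y + v, ?_, ?_⟩
      · simp only [Finset.mem_filter, Finset.mem_univ, true_and] at hy ⊢
        rw [dotp_add', hdv]
        rcases zmod2_cases' (dotp b y) with h | h
        · exact absurd h hy
        · rw [h]; decide
      · rw [add_assoc, zmod2_vec_add_self v, add_zero]
  have := Finset.card_filter_add_card_filter_not (s := (univ : Finset (Vec n)))
    (p := fun x => dotp b x = 0)
  rw [Finset.card_univ] at this
  have hcard : Fintype.card (Vec n) = 2 ^ n := by simp [Fintype.card_fun]
  omega

private lemma card_range_apn' (F : Vec n → Vec n) (ha : IsAPN F) (a : Vec n) (h0 : a ≠ 0) :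
    2 ^ n ≤ 2 * (univ.image (Dder F a)).card := by
  have h := Finset.card_le_mul_card_image (f := Dder F a) univ 2 (fun y _ => by
    have := ha a h0 y
    rw [← Fintype.card_subtype, ← Nat.card_eq_fintype_card]
    simpa [Dder] using this)
  rw [Finset.card_univ] at h
  have hcard : Fintype.card (Vec n) = 2 ^ n := by simp [Fintype.card_fun]
  omega

private lemma range_add_mem (F : Vec n → Vec n) (ha : IsAPN F)
    (b : Vec n) (hb : b ≠ 0) (a₁ a₂ : Vec n)
    (h1 : Set.range (Dder F a₁) = Hyp b) (h2 : Set.range (Dder F a₂) = Hyp b)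
    (h12 : a₁ + a₂ ≠ 0) : Set.range (Dder F (a₁ + a₂)) = Hyp b := by
  classical
  have hsub : Set.range (Dder F (a₁ + a₂)) ⊆ Hyp b := by
    rintro _ ⟨x, rfl⟩
    have key : Dder F (a₁ + a₂) x = Dder F a₁ x + Dder F a₂ (x + a₁) := by
      funext j
      simp only [Dder, Pi.add_apply, ← add_assoc]
      generalize F x j = p
      generalize F (x + a₁) j = q
      generalize F (x + a₁ + a₂) j = r
      revert p q r; decide
    have m1 : dotp b (Dder F a₁ x) = 0 := by
      have : Dder F a₁ x ∈ Hyp b := h1 ▸ Set.mem_range_self x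
      exact this
    have m2 : dotp b (Dder F a₂ (x + a₁)) = 0 := by
      have : Dder F a₂ (x + a₁) ∈ Hyp b := h2 ▸ Set.mem_range_self (x + a₁)
      exact this
    show dotp b _ = 0
    rw [key, dotp_add', m1, m2, add_zero]
  have hR : Set.range (Dder F (a₁ + a₂)) = ↑(univ.image (Dder F (a₁ + a₂))) := by simp
  have hH : Hyp b = ↑(univ.filter (fun x : Vec n => dotp b x = 0)) := by ext x; simp [Hyp]
  rw [hR, hH]
  rw [hR, hH] at hsub
  norm_cast at hsub ⊢
  apply Finset.eq_of_subset_of_card_le hsub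
  have := card_hyp' b hb
  have := card_range_apn' F ha (a₁ + a₂) h12
  omega

private lemma tset_add_mem (F : Vec n → Vec n) (ha : IsAPN F) (b : Vec n) (hb : b ≠ 0)
    {a₁ a₂ : Vec n} (m1 : a₁ ∈ Tset F b) (m2 : a₂ ∈ Tset F b) : a₁ + a₂ ∈ Tset F b := by
  rcases m1 with h1 | h1
  · rcases m2 with h2 | h2
    · by_cases h12 : a₁ + a₂ = 0
      · exact Or.inr h12
      · exact Or.inl (range_add_mem F ha b hb a₁ a₂ h1 h2 h12)
    · rw [Set.mem_singleton_iff] at h2; rw [h2, add_zero]; exact Or.inl h1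
  · rw [Set.mem_singleton_iff] at h1; rw [h1, zero_add]; exact m2

end Aux

theorem stmt_0 {n : ℕ} (F : Vec n → Vec n) (hq : IsQuadratic F) (ha : IsAPN F)
    (b : Vec n) (hb : b ≠ 0) :
    ∃ S : Submodule (ZMod 2) (Vec n), (S : Set (Vec n)) = Tset F b := by
    classical
  refine ⟨{ carrier := Tset F b
            add_mem' := fun m1 m2 => tset_add_mem F ha b hb m1 m2
            zero_mem' := Or.inr rfl
            smul_mem' := ?_ }, rfl⟩
  intro c x hx
  rcases zmod2_cases' c with h | h
  · rw [h, zero_smul]; exact Or.inr rfl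
  · rw [h, one_smul]; exact hx
end

section
/- With the notation above, the set V_b = T_b ∪ T̄_b is an F_2-linear subspace of F_2^n, of dimension dim(T_b) if T̄_b is empty and dim(T_b) + 1 otherwise. -/
open Finset

/-!
For quadratic `F` the polar map `polar F a x = F (a + x) + F a + F x + F 0` is biadditive,
and `D_a F (x) = polar F a x + D_a F (0)`. Hence `⟨b, D_a F⟩` is constant exactly when `a` lies
in the radical `V` of the symmetric bilinear form `⟨b, polar F⟩`, and the constant
`⟨b, D_a F (0)⟩` is a linear functional on `V`. For `a ≠ 0` the fibres of `D_a F` have at most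
two points (APN), so its image has at least `2 ^ (n - 1)` elements and fills the affine
hyperplane containing it.
Thus `V_b = V`, `T_b` is the kernel of the functional and `T̄_b` its non-kernel part, which is
nonempty iff the functional is onto.
-/

lemma ZMod.two_eq_zero_or_eq_one (t : ZMod 2) : t = 0 ∨ t = 1 := by
  decide +revert

section Polar

variable {n m : ℕ}

def polar (F : Vec n → Vec m) (a x : Vec n) : Vec m := F (a + x) + F a + F x + F 0

@[simp]
lemma polar_zero_left (F : Vec n → Vec m) (x : Vec n) : polar F 0 x = 0 := by
  rw [polar, zero_add]
  linear_combination ZModModule.add_self (F x) + ZModModule.add_self (F 0)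

@[simp]
lemma polar_zero_right (F : Vec n → Vec m) (a : Vec n) : polar F a 0 = 0 := by
  rw [polar, add_zero]
  linear_combination ZModModule.add_self (F a) + ZModModule.add_self (F 0)

lemma map_add_add_map_zero (F : Vec n → Vec m) (a a' : Vec n) :
    F (a + a') + F 0 = (F a + F 0) + (F a' + F 0) + polar F a a' := by
  rw [polar]
  linear_combination -ZModModule.add_self (F a) - ZModModule.add_self (F a') -
    ZModModule.add_self (F 0)

lemma Dder_eq_polar_add (F : Vec n → Vec n) (a x : Vec n) :
    Dder F a x = polar F a x + (F a + F 0) := by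
  rw [Dder, polar, add_comm x a]
  linear_combination -ZModModule.add_self (F a) - ZModModule.add_self (F 0)

lemma IsQuadratic.polar_add_left {F : Vec n → Vec m} (hq : IsQuadratic F) (a a' x : Vec n) :
    polar F (a + a') x = polar F a x + polar F a' x := by
  obtain ⟨c, hc⟩ := hq a x
  have hshift : F (a' + a + x) + F (a' + a) + F (a' + x) + F a' = polar F a x := by
    rw [hc, ← hc 0, polar]
    simp only [zero_add]
  rw [← hshift, polar, polar, add_comm a a']
  linear_combination -ZModModule.add_self (F (a' + x)) - ZModModule.add_self (F a')

end Polar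

section Counting

variable {n : ℕ}

lemma two_mul_card_filter_dotProduct_eq {b : Vec n} (hb : b ≠ 0) (v : ZMod 2) :
    2 * #{y : Vec n | b ⬝ᵥ y = v} = 2 ^ n := by
  let φ : Vec n →+ ZMod 2 := AddMonoidHom.mk' (b ⬝ᵥ ·) (dotProduct_add b)
  obtain ⟨i, hi⟩ := Function.ne_iff.1 hb
  have hbi : b i = 1 := (ZMod.two_eq_zero_or_eq_one _).resolve_left hi
  have hφ (w : ZMod 2) : w ∈ Set.range φ := ⟨Pi.single i w, by simp [φ, hbi]⟩
  have hfibers : #(univ : Finset (Vec n)) = ∑ w : ZMod 2, #{y | φ y = w} :=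
    card_eq_sum_card_fiberwise fun _ _ => mem_univ _
  rw [Finset.sum_congr rfl fun w _ => AddMonoidHom.card_fiber_eq_of_mem_range φ (hφ w) (hφ v),
    sum_const, card_univ, card_univ, ZMod.card, Fintype.card_fun, ZMod.card, Fintype.card_fin,
    smul_eq_mul] at hfibers
  exact hfibers.symm

lemma IsAPN.two_pow_le_two_mul_card_image {F : Vec n → Vec n} (ha : IsAPN F) {a : Vec n}
    (hne : a ≠ 0) : 2 ^ n ≤ 2 * #(univ.image (Dder F a)) := by
  have hfiber (y : Vec n) : #{x | Dder F a x = y} ≤ 2 := by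
    rw [← Fintype.card_subtype, ← Nat.card_eq_fintype_card]
    exact ha a hne y
  simpa [Fintype.card_fun, ZMod.card] using card_le_mul_card_image univ 2 fun y _ => hfiber y

end Counting

section ImageOfDerivative

variable {n : ℕ} {F : Vec n → Vec n} {a b : Vec n} {v : ZMod 2}

lemma range_Dder_subset_iff :
    Set.range (Dder F a) ⊆ {y | b ⬝ᵥ y = v} ↔
      (∀ x, b ⬝ᵥ polar F a x = 0) ∧ b ⬝ᵥ (F a + F 0) = v := by
  simp only [Set.range_subset_iff, Set.mem_ofPred_eq, Dder_eq_polar_add,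
    dotProduct_add b (polar F a _)]
  refine ⟨fun h => ?_, fun ⟨hpolar, hv⟩ x => by rw [hpolar, hv, zero_add]⟩
  have hv : b ⬝ᵥ (F a + F 0) = v := by simpa using h 0
  refine ⟨fun x => ?_, hv⟩
  simpa [hv] using h x

lemma IsAPN.range_Dder_eq_of_subset (ha : IsAPN F) (hb : b ≠ 0) (hne : a ≠ 0)
    (hsub : Set.range (Dder F a) ⊆ {y | b ⬝ᵥ y = v}) :
    Set.range (Dder F a) = {y | b ⬝ᵥ y = v} := by
  have himage : univ.image (Dder F a) = ({y | b ⬝ᵥ y = v} : Finset (Vec n)) := by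
    refine eq_of_subset_of_card_le (fun y hy => ?_) ?_
    · obtain ⟨x, -, rfl⟩ := mem_image.1 hy
      simpa using hsub ⟨x, rfl⟩
    · have := ha.two_pow_le_two_mul_card_image hne
      have := two_mul_card_filter_dotProduct_eq hb v
      omega
  simpa using congrArg ((↑) : Finset (Vec n) → Set (Vec n)) himage

lemma IsAPN.range_Dder_eq_iff (ha : IsAPN F) (hb : b ≠ 0) (hne : a ≠ 0) :
    Set.range (Dder F a) = {y | b ⬝ᵥ y = v} ↔
      (∀ x, b ⬝ᵥ polar F a x = 0) ∧ b ⬝ᵥ (F a + F 0) = v :=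
  ⟨fun h => range_Dder_subset_iff.1 h.subset,
    fun h => ha.range_Dder_eq_of_subset hb hne (range_Dder_subset_iff.2 h)⟩

end ImageOfDerivative

section Components

variable {n : ℕ} {F : Vec n → Vec n} {b : Vec n}

lemma mem_Tset_iff (ha : IsAPN F) (hb : b ≠ 0) {a : Vec n} :
    a ∈ Tset F b ↔ (∀ x, b ⬝ᵥ polar F a x = 0) ∧ b ⬝ᵥ (F a + F 0) = 0 := by
  rcases eq_or_ne a 0 with rfl | hne
  · simp [Tset, ZModModule.add_self]
  · simp only [Tset, Set.mem_union, Set.mem_singleton_iff, hne, or_false, Set.mem_ofPred_eq]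
    exact ha.range_Dder_eq_iff hb hne

lemma polar_eq_zero_and_offset_of_mem_TsetBar {a : Vec n} (h : a ∈ TsetBar F b) :
    (∀ x, b ⬝ᵥ polar F a x = 0) ∧ b ⬝ᵥ (F a + F 0) = 1 :=
  range_Dder_subset_iff.1 (show Set.range (Dder F a) = {y | b ⬝ᵥ y = 1} from h).subset

lemma mem_TsetBar_iff (ha : IsAPN F) (hb : b ≠ 0) {a : Vec n} :
    a ∈ TsetBar F b ↔ (∀ x, b ⬝ᵥ polar F a x = 0) ∧ b ⬝ᵥ (F a + F 0) = 1 := by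
  refine ⟨polar_eq_zero_and_offset_of_mem_TsetBar, fun h => ?_⟩
  have hne : a ≠ 0 := by
    rintro rfl
    simp [ZModModule.add_self] at h
  exact (ha.range_Dder_eq_iff hb hne).2 h

lemma mem_Vset_iff (ha : IsAPN F) (hb : b ≠ 0) {a : Vec n} :
    a ∈ Vset F b ↔ ∀ x, b ⬝ᵥ polar F a x = 0 := by
  rw [Vset, Set.mem_union, mem_Tset_iff ha hb, mem_TsetBar_iff ha hb, ← and_or_left,
    and_iff_left (ZMod.two_eq_zero_or_eq_one _)]

end Components

namespace IsQuadratic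

section Radical

variable {n m : ℕ} {F : Vec n → Vec m}

def radical (hq : IsQuadratic F) (b : Vec m) : Submodule (ZMod 2) (Vec n) where
  carrier := {a | ∀ x, b ⬝ᵥ polar F a x = 0}
  add_mem' {a a'} ha ha' x := by rw [hq.polar_add_left, dotProduct_add, ha x, ha' x, add_zero]
  zero_mem' x := by simp
  smul_mem' c a ha := by
    rcases ZMod.two_eq_zero_or_eq_one c with rfl | rfl
    · simp
    · rwa [one_smul]

variable (hq : IsQuadratic F) (b : Vec m)

lemma mem_radical {a : Vec n} : a ∈ hq.radical b ↔ ∀ x, b ⬝ᵥ polar F a x = 0 := Iff.rfl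

/-- The constant value of `⟨b, D_a F⟩` for `a` in the radical (see `Dder_eq_polar_add`). -/
def radicalOffset : hq.radical b →ₗ[ZMod 2] ZMod 2 :=
  AddMonoidHom.toZModLinearMap 2
    { toFun a := b ⬝ᵥ (F a + F 0)
      map_zero' := by simp [ZModModule.add_self]
      map_add' a a' := by
        rw [Submodule.coe_add, map_add_add_map_zero, dotProduct_add, dotProduct_add, a.2 a',
          add_zero] }

end Radical

variable {n : ℕ} {F : Vec n → Vec n} (hq : IsQuadratic F) {b : Vec n}

lemma coe_radical (ha : IsAPN F) (hb : b ≠ 0) : (hq.radical b : Set (Vec n)) = Vset F b :=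
  Set.ext fun _ => (mem_Vset_iff ha hb).symm

lemma coe_map_ker_radicalOffset (ha : IsAPN F) (hb : b ≠ 0) :
    ((LinearMap.ker (hq.radicalOffset b)).map (hq.radical b).subtype : Set (Vec n)) = Tset F b := by
  ext a
  simp [mem_Tset_iff ha hb, radicalOffset, mem_radical, and_comm]

lemma radicalOffset_eq_zero (ha : IsAPN F) (hb : b ≠ 0) (h : TsetBar F b = ∅) :
    hq.radicalOffset b = 0 := by
  ext ⟨a, hmem⟩
  refine (ZMod.two_eq_zero_or_eq_one _).resolve_right fun h1 => ?_
  have : a ∈ TsetBar F b := (mem_TsetBar_iff ha hb).2 ⟨hmem, h1⟩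
  simp [h] at this

lemma radicalOffset_surjective (h : (TsetBar F b).Nonempty) :
    Function.Surjective (hq.radicalOffset b) := by
  obtain ⟨a, hmem⟩ := h
  obtain ⟨hrad, h1⟩ := polar_eq_zero_and_offset_of_mem_TsetBar hmem
  intro v
  refine ⟨v • ⟨a, hrad⟩, ?_⟩
  rw [map_smul, show hq.radicalOffset b ⟨a, hrad⟩ = 1 from h1, smul_eq_mul, mul_one]

end IsQuadratic

theorem stmt_2 {n : ℕ} (F : Vec n → Vec n) (hq : IsQuadratic F) (ha : IsAPN F)
    (b : Vec n) (hb : b ≠ 0) :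
    ∃ S S' : Submodule (ZMod 2) (Vec n),
      (S : Set (Vec n)) = Tset F b ∧ (S' : Set (Vec n)) = Vset F b ∧
      (TsetBar F b = ∅ →
        Module.finrank (ZMod 2) S' = Module.finrank (ZMod 2) S) ∧
      (TsetBar F b ≠ ∅ →
        Module.finrank (ZMod 2) S' = Module.finrank (ZMod 2) S + 1) := by
  have hrank := LinearMap.finrank_range_add_finrank_ker (hq.radicalOffset b)
  rw [← Submodule.finrank_map_subtype_eq] at hrank
  refine ⟨_, hq.radical b, hq.coe_map_ker_radicalOffset ha hb, hq.coe_radical ha hb,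
    fun h => ?_, fun h => ?_⟩
  · rw [LinearMap.range_eq_bot.2 (hq.radicalOffset_eq_zero ha hb h), finrank_bot] at hrank
    omega
  · rw [LinearMap.range_eq_top.2 (hq.radicalOffset_surjective (Set.nonempty_iff_ne_empty.2 h)),
      finrank_top, Module.finrank_self] at hrank
    omega
end

section
/- Let F : F_2^n → F_2^n be a quadratic APN function, and for each nonzero b define V_b = T_b ∪ T̄_b as above. Then the collection {V_b : b ≠ 0, V_b ≠ {0}} forms a vector space partition of F_2^n: every nonzero vector of F_2^n lies in exactly one of the subspaces V_b, and V_{b1} ∩ V_{b2} = {0} for distinct nonzero b1, b2. -/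
open Finset

/-!
For a quadratic `F`, the derivative `D_{F,a}` is affine: `D_{F,a}(x) = L_a(x) + D_{F,a}(0)` with
`L_a` linear and `a ∈ ker L_a`. The APN property says that every value of `D_{F,a}` is taken at
most twice, so `ker L_a = {0, a}` and the image of `L_a` is a linear hyperplane `H_b`. Hence the
image of `D_{F,a}` is `H_b` or `H̄_b`, and `b` is determined by that image.
-/

lemma dotp_add_right {n : ℕ} (b x y : Vec n) : dotp b (x + y) = dotp b x + dotp b y :=
  dotProduct_add b x y

lemma dotp_single_one {n : ℕ} (b : Vec n) (i : Fin n) : dotp b (Pi.single i 1) = b i :=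
  dotProduct_single_one b i

section Hyperplanes

variable {n : ℕ}

lemma hyp_injective : Function.Injective (Hyp (n := n)) := by
  intro b b' h
  funext i
  have hi : dotp b (Pi.single i 1) = 0 ↔ dotp b' (Pi.single i 1) = 0 := Set.ext_iff.mp h _
  rw [dotp_single_one, dotp_single_one] at hi
  generalize b i = u, b' i = v at hi
  revert u v
  decide

lemma hypBar_eq_compl (b : Vec n) : HypBar b = (Hyp b)ᶜ := by
  ext x
  change dotp b x = 1 ↔ ¬dotp b x = 0
  generalize dotp b x = u
  revert u
  decide

lemma hypBar_injective : Function.Injective (HypBar (n := n)) := fun b b' h =>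
  hyp_injective (compl_injective (by rwa [← hypBar_eq_compl, ← hypBar_eq_compl]))

lemma zero_mem_hyp (b : Vec n) : (0 : Vec n) ∈ Hyp b := dotProduct_zero b

lemma hyp_ne_hypBar (b b' : Vec n) : Hyp b ≠ HypBar b' := by
  intro h
  have h0 := zero_mem_hyp b
  rw [h, hypBar_eq_compl] at h0
  exact h0 (zero_mem_hyp b')

lemma eq_of_eq_hyp_or_hypBar {S : Set (Vec n)} {b b' : Vec n}
    (hb : S = Hyp b ∨ S = HypBar b) (hb' : S = Hyp b' ∨ S = HypBar b') : b = b' := by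
  rcases hb with rfl | rfl <;> rcases hb' with h | h
  · exact hyp_injective h
  · exact absurd h (hyp_ne_hypBar b b')
  · exact absurd h.symm (hyp_ne_hypBar b' b)
  · exact hypBar_injective h

lemma setOf_dotp_eq_hyp_or_hypBar (b : Vec n) (t : ZMod 2) :
    {y | dotp b y = t} = Hyp b ∨ {y | dotp b y = t} = HypBar b := by
  fin_cases t
  exacts [Or.inl rfl, Or.inr rfl]

lemma exists_hyp_eq_of_finrank_add_one {W : Submodule (ZMod 2) (Vec n)}
    (hW : Module.finrank (ZMod 2) W + 1 = n) : ∃ b ≠ 0, (W : Set (Vec n)) = Hyp b := by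
  have hlt : W < ⊤ := by
    refine lt_top_iff_ne_top.2 fun htop => ?_
    rw [htop, finrank_top, Module.finrank_fin_fun] at hW
    omega
  obtain ⟨f, hf0, hfW⟩ := Submodule.exists_dual_map_eq_bot_of_lt_top hlt inferInstance
  have hker : W = LinearMap.ker f :=
    Submodule.eq_of_le_of_finrank_eq (LinearMap.le_ker_iff_map.2 hfW) <| by
      have := f.finrank_ker_add_one_of_ne_zero hf0
      rw [Module.finrank_fin_fun] at this
      omega
  let e := dotProductEquiv (ZMod 2) (Fin n)
  refine ⟨e.symm f, by simpa using hf0, ?_⟩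
  ext x
  change x ∈ W ↔ e (e.symm f) x = 0
  rw [e.apply_symm_apply, hker, LinearMap.mem_ker]

end Hyperplanes

section Derivatives

variable {n : ℕ} {F : Vec n → Vec n}

lemma dder_add_self (a x : Vec n) : Dder F a (x + a) = Dder F a x := by
  rw [Dder, Dder, add_assoc, ZModModule.add_self, add_zero, add_comm]

lemma IsQuadratic.dder_add (hq : IsQuadratic F) (a x y : Vec n) :
    Dder F a (x + y) = Dder F a x + Dder F a y + Dder F a 0 := by
  obtain ⟨c, hc⟩ := hq a y
  have hx : Dder F a x + Dder F a (x + y) = c := by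
    rw [← hc x, Dder, Dder, add_right_comm x y a]; abel
  have h0 : Dder F a 0 + Dder F a y = c := by
    rw [← hc 0]; simp only [Dder, zero_add]; rw [add_comm y a]; abel
  calc Dder F a (x + y) = c - Dder F a x := eq_sub_of_add_eq' hx
    _ = Dder F a x + Dder F a y + Dder F a 0 := by
      rw [← h0, ZModModule.sub_eq_add]; abel

lemma IsQuadratic.exists_linearMap_dder_eq (hq : IsQuadratic F) (a : Vec n) :
    ∃ L : Vec n →ₗ[ZMod 2] Vec n, ∀ x, Dder F a x = L x + Dder F a 0 := by
  let L : Vec n →+ Vec n :=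
    { toFun := fun x => Dder F a x + Dder F a 0
      map_zero' := ZModModule.add_self _
      map_add' := fun x y => by rw [hq.dder_add]; abel }
  refine ⟨L.toZModLinearMap 2, fun x => ?_⟩
  change _ = Dder F a x + Dder F a 0 + Dder F a 0
  rw [add_assoc, ZModModule.add_self, add_zero]

lemma IsAPN.eq_or_eq_add_of_dder_eq (ha : IsAPN F) {a x y : Vec n} (ha0 : a ≠ 0)
    (h : Dder F a x = Dder F a y) : x = y ∨ x = y + a := by
  classical
  by_contra! hxy
  have hya : y ≠ y + a := fun e => ha0 (by simpa using e)
  have hsub : ({x, y, y + a} : Finset (Vec n)) ⊆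
      Finset.univ.filter fun z => Dder F a z = Dder F a y := by
    intro z hz
    simp only [Finset.mem_insert, Finset.mem_singleton] at hz
    rcases hz with rfl | rfl | rfl
    exacts [by simpa using h, by simp, by simpa using dder_add_self a y]
  have h3 : ({x, y, y + a} : Finset (Vec n)).card = 3 := by
    rw [Finset.card_insert_of_notMem (by simpa using hxy), Finset.card_pair hya]
  have h2 : (Finset.univ.filter fun z => Dder F a z = Dder F a y).card ≤ 2 := by
    have := ha a ha0 (Dder F a y)
    rwa [Nat.card_eq_fintype_card, Fintype.card_subtype] at this
  have := Finset.card_le_card hsub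
  omega

end Derivatives

section Partition

variable {n : ℕ} {F : Vec n → Vec n}

lemma range_eq_setOf_dotp {D : Vec n → Vec n} {L : Vec n →ₗ[ZMod 2] Vec n} {b c : Vec n}
    (hD : ∀ x, D x = L x + c) (hL : (LinearMap.range L : Set (Vec n)) = Hyp b) :
    Set.range D = {y | dotp b y = dotp b c} := by
  ext y
  have hy : y ∈ Set.range D ↔ y + c ∈ (LinearMap.range L : Set (Vec n)) := by
    constructor
    · rintro ⟨x, rfl⟩
      exact ⟨x, by rw [hD, add_assoc, ZModModule.add_self, add_zero]⟩
    · rintro ⟨x, hx⟩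
      exact ⟨x, by rw [hD, hx, add_assoc, ZModModule.add_self, add_zero]⟩
  rw [hy, hL]
  change dotp b (y + c) = 0 ↔ dotp b y = dotp b c
  rw [dotp_add_right, ← ZModModule.sub_eq_add, sub_eq_zero]

theorem exists_range_dder_eq (hq : IsQuadratic F) (ha : IsAPN F) {a : Vec n} (ha0 : a ≠ 0) :
    ∃ b ≠ 0, Set.range (Dder F a) = Hyp b ∨ Set.range (Dder F a) = HypBar b := by
  obtain ⟨L, hL⟩ := hq.exists_linearMap_dder_eq a
  have hker_iff : ∀ x, L x = 0 ↔ Dder F a x = Dder F a 0 := fun x => by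
    rw [hL x, add_eq_right]
  have hker : LinearMap.ker L = ZMod 2 ∙ a := by
    refine le_antisymm (fun x hx => ?_) ((Submodule.span_singleton_le_iff_mem _ _).2 ?_)
    · rcases ha.eq_or_eq_add_of_dder_eq ha0 ((hker_iff x).1 hx) with rfl | rfl
      · exact zero_mem _
      · rw [zero_add]; exact Submodule.mem_span_singleton_self a
    · exact (hker_iff a).2 (by simpa using dder_add_self (F := F) a 0)
  have hrank : Module.finrank (ZMod 2) (LinearMap.range L) + 1 = n := by
    have := L.finrank_range_add_finrank_ker
    rwa [hker, finrank_span_singleton ha0, Module.finrank_fin_fun] at this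
  obtain ⟨b, hb0, hb⟩ := exists_hyp_eq_of_finrank_add_one hrank
  rw [range_eq_setOf_dotp hL hb]
  exact ⟨b, hb0, setOf_dotp_eq_hyp_or_hypBar b _⟩

lemma mem_vset_iff {a b : Vec n} (ha0 : a ≠ 0) :
    a ∈ Vset F b ↔ Set.range (Dder F a) = Hyp b ∨ Set.range (Dder F a) = HypBar b := by
  simp [Vset, Tset, TsetBar, ha0]

lemma zero_mem_vset (b : Vec n) : (0 : Vec n) ∈ Vset F b := Or.inl (Or.inr rfl)

end Partition

theorem stmt_3 {n : ℕ} (F : Vec n → Vec n) (hq : IsQuadratic F) (ha : IsAPN F) :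
    (∀ x : Vec n, x ≠ 0 → ∃! b : {b : Vec n // b ≠ 0}, x ∈ Vset F b.1) ∧
    (∀ b₁ b₂ : Vec n, b₁ ≠ 0 → b₂ ≠ 0 → b₁ ≠ b₂ →
      Vset F b₁ ∩ Vset F b₂ = {0}) := by
  refine ⟨fun x hx => ?_, fun b₁ b₂ _ _ hne => ?_⟩
  · obtain ⟨b, hb0, hb⟩ := exists_range_dder_eq hq ha hx
    exact ⟨⟨b, hb0⟩, (mem_vset_iff hx).2 hb,
      fun b' hb' => Subtype.ext (eq_of_eq_hyp_or_hypBar ((mem_vset_iff hx).1 hb') hb)⟩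
  · refine Set.eq_singleton_iff_unique_mem.2 ⟨⟨zero_mem_vset b₁, zero_mem_vset b₂⟩, ?_⟩
    rintro y ⟨hy₁, hy₂⟩
    by_contra hy
    exact hne (eq_of_eq_hyp_or_hypBar ((mem_vset_iff hy).1 hy₁) ((mem_vset_iff hy).1 hy₂))
end

section
/- Let F : F_2^n → F_2^n be a quadratic APN function with n even, and for each nonzero b let 2^{(n+l_b)/2} be the amplitude of the component F_b. Then Σ_{b ≠ 0} 2^{l_b} = 2(2^n − 1). -/
open Finset

/-!
Sum the fourth moments of the Walsh spectrum over all components `b`. For a single component,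
`∑ₐ W(b,a)⁴ = 2ⁿ ∑ᵤ C_b(u)²`, where `C_b` is the autocorrelation of `(-1)^{⟨b,F⟩}`; summing
`C_b(u)²` over `b` counts the pairs `(x, y)` with `D_u F(x) = D_u F(y)`, which is `2ⁿ⁺¹` for every
`u ≠ 0` when `F` is APN. On the other hand, a component of amplitude `2^{(n+l)/2}` has fourth moment
`2^{n+l}` times its second moment `2^{2n}` (Parseval), and the trivial component `b = 0` has
`l = n`. Comparing the two evaluations gives
`2^{3n} (2ⁿ + ∑_{b ≠ 0} 2^{l_b}) = 2^{2n} (2^{2n} + (2ⁿ - 1) 2ⁿ⁺¹)`.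
-/

namespace Vec

variable {n : ℕ}

lemma add_self (x : Vec n) : x + x = 0 := funext fun i => CharTwo.add_self_eq_zero (x i)

lemma add_eq_zero_iff_eq {x y : Vec n} : x + y = 0 ↔ x = y := by
  rw [add_eq_zero_iff_eq_neg, show -y = y from funext fun i => CharTwo.neg_eq (y i)]

end Vec

def signChar : AddChar (ZMod 2) ℤ where
  toFun u := (-1) ^ u.val
  map_zero_eq_one' := rfl
  map_add_eq_mul' := by decide

lemma signChar_one : signChar 1 = -1 := rfl

lemma signChar_sq (u : ZMod 2) : signChar u ^ 2 = 1 := by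
  revert u; decide

lemma sum_signChar_dotProduct {n : ℕ} (v : Vec n) :
    ∑ a : Vec n, signChar (a ⬝ᵥ v) = if v = 0 then 2 ^ n else 0 := by
  let ψ : AddChar (Vec n) ℤ :=
    signChar.compAddMonoidHom
      ⟨⟨fun a => a ⬝ᵥ v, zero_dotProduct v⟩, fun a b => add_dotProduct a b v⟩
  have hψ : ψ = 0 ↔ v = 0 := by
    refine ⟨fun h => ?_, fun h => AddChar.eq_zero_iff.2 fun a => by simp [ψ, h]⟩
    by_contra hv
    obtain ⟨i, hi⟩ := Function.ne_iff.1 hv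
    have hvi : v i = 1 := by
      have : ∀ t : ZMod 2, t ≠ 0 → t = 1 := by decide
      exact this _ hi
    have := AddChar.eq_zero_iff.1 h (Pi.single i 1)
    simp [ψ, single_dotProduct, hvi, signChar_one] at this
  classical
  change ∑ a, ψ a = _
  rw [AddChar.sum_eq_ite]
  simp [hψ]

section Hadamard

variable {n : ℕ}

def hadamard (g : Vec n → ℤ) (a : Vec n) : ℤ := ∑ x, g x * signChar (a ⬝ᵥ x)

def autocorr (g : Vec n → ℤ) (u : Vec n) : ℤ := ∑ x, g x * g (x + u)

lemma sum_hadamard (c : Vec n → ℤ) : ∑ a, hadamard c a = 2 ^ n * c 0 := by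
  unfold hadamard
  rw [Finset.sum_comm]
  simp_rw [← Finset.mul_sum, sum_signChar_dotProduct, mul_ite, mul_zero]
  simp [mul_comm]

lemma hadamard_sq (g : Vec n → ℤ) (a : Vec n) : hadamard g a ^ 2 = hadamard (autocorr g) a := by
  calc hadamard g a ^ 2
      = ∑ x, ∑ u, g x * signChar (a ⬝ᵥ x) * (g (x + u) * signChar (a ⬝ᵥ (x + u))) := by
        rw [hadamard, sq, Finset.sum_mul_sum]
        exact Finset.sum_congr rfl fun x _ =>
          (Fintype.sum_equiv (Equiv.addLeft x) _ _ fun u => rfl).symm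
    _ = ∑ x, ∑ u, g x * g (x + u) * signChar (a ⬝ᵥ u) := by
        refine Finset.sum_congr rfl fun x _ => Finset.sum_congr rfl fun u _ => ?_
        rw [dotProduct_add, AddChar.map_add_eq_mul]
        linear_combination g x * g (x + u) * signChar (a ⬝ᵥ u) * signChar_sq (a ⬝ᵥ x)
    _ = hadamard (autocorr g) a := by
        rw [Finset.sum_comm]
        simp only [hadamard, autocorr, Finset.sum_mul]

lemma sum_hadamard_sq (g : Vec n → ℤ) : ∑ a, hadamard g a ^ 2 = 2 ^ n * ∑ x, g x ^ 2 := by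
  simp only [hadamard_sq, sum_hadamard, autocorr, add_zero, ← sq]

lemma sum_hadamard_pow_four (g : Vec n → ℤ) :
    ∑ a, hadamard g a ^ 4 = 2 ^ n * ∑ u, autocorr g u ^ 2 := by
  rw [← sum_hadamard_sq]
  exact Finset.sum_congr rfl fun a _ => by rw [← hadamard_sq]; ring

end Hadamard

section Walsh

variable {n m : ℕ}

def componentSign (F : Vec n → Vec m) (b : Vec m) (x : Vec n) : ℤ := signChar (b ⬝ᵥ F x)

lemma walsh_eq_hadamard (F : Vec n → Vec m) (b : Vec m) (a : Vec n) :
    Walsh F b a = hadamard (componentSign F b) a :=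
  Finset.sum_congr rfl fun _ _ => AddChar.map_add_eq_mul signChar _ _

lemma sum_walsh_sq (F : Vec n → Vec m) (b : Vec m) :
    ∑ a, Walsh F b a ^ 2 = 2 ^ (2 * n) := by
  simp only [walsh_eq_hadamard, sum_hadamard_sq, componentSign, signChar_sq, Finset.sum_const,
    Finset.card_univ, Fintype.card_pi, ZMod.card, Finset.prod_const, Fintype.card_fin]
  ring

lemma sum_walsh_pow_four_of_hasAmp {F : Vec n → Vec m} {b : Vec m} {k : ℕ}
    (h : HasAmp F b k) : ∑ a, Walsh F b a ^ 4 = 2 ^ (n + k) * 2 ^ (2 * n) := by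
  have hW : ∀ a, Walsh F b a ^ 4 = 2 ^ (n + k) * Walsh F b a ^ 2 := fun a => by
    rcases h.1 a with h0 | hamp
    · rw [show Walsh F b a ^ 4 = (Walsh F b a ^ 2) ^ 2 by ring, h0]; ring
    · rw [show Walsh F b a ^ 4 = (Walsh F b a ^ 2) ^ 2 by ring, hamp, sq]
  rw [Finset.sum_congr rfl fun a _ => hW a, ← Finset.mul_sum, sum_walsh_sq]

lemma walsh_zero_left (F : Vec n → Vec m) (a : Vec n) :
    Walsh F 0 a = if a = 0 then 2 ^ n else 0 := by
  simp only [walsh_eq_hadamard, hadamard, componentSign, zero_dotProduct, AddChar.map_zero_eq_one,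
    one_mul, dotProduct_comm a]
  exact sum_signChar_dotProduct a

lemma hasAmp_zero (F : Vec n → Vec m) : HasAmp F 0 n := by
  refine ⟨fun a => ?_, 0, by simp [walsh_zero_left, ← pow_mul, mul_two]⟩
  rw [walsh_zero_left]
  split_ifs
  · exact Or.inr (by rw [← pow_mul, mul_two])
  · exact Or.inl (by ring)

end Walsh

lemma sum_sq_sum_signChar {α : Type*} [Fintype α] {m : ℕ} (v : α → Vec m) :
    ∑ b : Vec m, (∑ x, signChar (b ⬝ᵥ v x)) ^ 2 = 2 ^ m * #{p : α × α | v p.1 = v p.2} := by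
  calc ∑ b : Vec m, (∑ x, signChar (b ⬝ᵥ v x)) ^ 2
      = ∑ x, ∑ y, ∑ b : Vec m, signChar (b ⬝ᵥ (v x + v y)) := by
        simp only [sq, Finset.sum_mul_sum, dotProduct_add, AddChar.map_add_eq_mul]
        rw [Finset.sum_comm]
        exact Finset.sum_congr rfl fun x _ => Finset.sum_comm
    _ = ∑ x, ∑ y, if v x = v y then 2 ^ m else 0 := by
        simp only [sum_signChar_dotProduct, Vec.add_eq_zero_iff_eq]
    _ = 2 ^ m * #{p : α × α | v p.1 = v p.2} := by
        rw [Finset.card_filter, ← Finset.univ_product_univ, Finset.sum_product]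
        push_cast
        simp only [Finset.mul_sum, mul_ite, mul_one, mul_zero]

section APN

variable {n : ℕ}

lemma autocorr_componentSign (F : Vec n → Vec n) (b u : Vec n) :
    autocorr (componentSign F b) u = ∑ x, signChar (b ⬝ᵥ Dder F u x) := by
  simp only [autocorr, componentSign, Dder, dotProduct_add, AddChar.map_add_eq_mul]

lemma sum_sum_walsh_pow_four (F : Vec n → Vec n) :
    ∑ b, ∑ a, Walsh F b a ^ 4 =
      2 ^ (2 * n) * ∑ u, (#{p : Vec n × Vec n | Dder F u p.1 = Dder F u p.2} : ℤ) := by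
  simp only [walsh_eq_hadamard, sum_hadamard_pow_four, autocorr_componentSign]
  rw [← Finset.mul_sum, Finset.sum_comm]
  simp only [sum_sq_sum_signChar, ← Finset.mul_sum]
  ring

lemma card_filter_dder_eq {F : Vec n → Vec n} (ha : IsAPN F) {u : Vec n} (hu : u ≠ 0)
    (x : Vec n) :
    #{y | Dder F u x = Dder F u y} = 2 := by
  refine le_antisymm ?_ ?_
  · have h := ha u hu (Dder F u x)
    rw [Nat.card_eq_fintype_card, Fintype.card_subtype] at h
    simp only [Dder, eq_comm] at h ⊢
    exact h
  · have hx : x ≠ x + u := fun h => hu (by simpa using h)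
    have hxu : Dder F u (x + u) = Dder F u x := by
      rw [Dder, Dder, add_assoc, Vec.add_self, add_zero, add_comm]
    calc 2 = #{x, x + u} := (Finset.card_pair hx).symm
      _ ≤ #{y | Dder F u x = Dder F u y} := Finset.card_le_card (by
        intro y hy
        rcases Finset.mem_insert.1 hy with rfl | hy
        · simp
        · simp [Finset.mem_singleton.1 hy, hxu])

lemma card_dder_eq_of_isAPN {F : Vec n → Vec n} (ha : IsAPN F) {u : Vec n} (hu : u ≠ 0) :
    #{p : Vec n × Vec n | Dder F u p.1 = Dder F u p.2} = 2 ^ (n + 1) := by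
  rw [Finset.card_filter, ← Finset.univ_product_univ, Finset.sum_product]
  simp only [← Finset.card_filter, card_filter_dder_eq ha hu]
  simp [pow_succ]

lemma card_dder_zero (F : Vec n → Vec n) :
    #{p : Vec n × Vec n | Dder F 0 p.1 = Dder F 0 p.2} = 2 ^ (2 * n) := by
  simp [Dder, Vec.add_self, pow_mul', sq]

lemma sum_sum_walsh_pow_four_of_isAPN {F : Vec n → Vec n} (ha : IsAPN F) :
    ∑ b, ∑ a, Walsh F b a ^ 4 = 2 ^ (2 * n) * (2 ^ (2 * n) + (2 ^ n - 1) * 2 ^ (n + 1)) := by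
  rw [sum_sum_walsh_pow_four, ← Finset.add_sum_erase _ _ (Finset.mem_univ 0), card_dder_zero,
    Finset.sum_congr rfl fun u hu => by rw [card_dder_eq_of_isAPN ha (Finset.ne_of_mem_erase hu)]]
  simp [Finset.card_erase_of_mem]

end APN

theorem stmt_5_general {n : ℕ} (F : Vec n → Vec n)
    (ha : IsAPN F) (l : Vec n → ℕ)
    (hl : ∀ b : Vec n, b ≠ 0 → HasAmp F b (l b)) :
    ∑ b ∈ Finset.univ.erase (0 : Vec n), 2 ^ (l b) = 2 * (2 ^ n - 1) := by
  have htotal := sum_sum_walsh_pow_four_of_isAPN ha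
  rw [← Finset.add_sum_erase _ _ (Finset.mem_univ 0),
    sum_walsh_pow_four_of_hasAmp (hasAmp_zero F),
    Finset.sum_congr rfl fun b hb =>
      sum_walsh_pow_four_of_hasAmp (hl b (Finset.ne_of_mem_erase hb)),
    ← Finset.sum_mul] at htotal
  simp only [pow_add _ n, ← Finset.mul_sum] at htotal
  have hsum : (∑ b ∈ Finset.univ.erase (0 : Vec n), 2 ^ l b : ℤ) = 2 * (2 ^ n - 1) := by
    refine mul_left_cancel₀ (pow_ne_zero (3 * n) (two_ne_zero : (2 : ℤ) ≠ 0)) ?_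
    linear_combination htotal
  zify [Nat.one_le_two_pow]
  exact hsum

theorem stmt_5 {n : ℕ} (hn : Even n) (F : Vec n → Vec n) (hq : IsQuadratic F)
    (ha : IsAPN F) (l : Vec n → ℕ)
    (hl : ∀ b : Vec n, b ≠ 0 → HasAmp F b (l b)) :
    ∑ b ∈ Finset.univ.erase (0 : Vec n), 2 ^ (l b) = 2 * (2 ^ n - 1) :=
  stmt_5_general F ha l hl
end

section
/- Let n be even and F : F_2^n → F_2^n be a quadratic APN function with linearity L(F) = 2^{(n+l)/2} where l > n/2. Then F has exactly one component function of amplitude 2^{(n+l)/2}, and every other nontrivial component has amplitude at most 2^{(2n−l)/2}. In particular, any quadratic APN function on F_2^n has at most one component of amplitude strictly larger than 2^{3n/4}. -/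
open Finset

/-!
Fix a component `b` of a quadratic `F`. Squaring the Walsh sum and substituting `y = x + u`
turns `W_F(b, a)²` into a sum over `u` of character sums of the linear forms
`x ↦ b ⬝ᵥ polar F x u`; these vanish unless `u` lies in the radical `R_b` of the alternating
form `b ⬝ᵥ polar F`, and on `R_b` the remaining phase is additive in `u`. Hence `W_F(b, a)²` is
`0` or `2 ^ (n + dim R_b)`.

For APN `F` and `u ≠ 0`, evaluating `∑ b, ∑ x, (-1) ^ (b ⬝ᵥ polar F x u)` in both orders shows
that the number of `b` with `u ∈ R_b` equals the number of solutions of `D_u F x = D_u F 0`,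
which is at most two. So the radicals of distinct nonzero components meet trivially,
`dim R_{b₁} + dim R_{b₂} ≤ n`, and the three claims become arithmetic on exponents.
-/

namespace QuadraticAPN

open scoped Matrix

def signChar : AddChar (ZMod 2) ℤ where
  toFun p := (-1) ^ p.val
  map_zero_eq_one' := rfl
  map_add_eq_mul' := by decide

lemma signChar_eq_one_iff {p : ZMod 2} : signChar p = 1 ↔ p = 0 := by
  revert p; decide

open Classical in
lemma sum_signChar_addMonoidHom {G : Type*} [AddCommGroup G] [Fintype G] (φ : G →+ ZMod 2) :
    ∑ x, signChar (φ x) = if φ = 0 then (Fintype.card G : ℤ) else 0 := by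
  have hψ : signChar.compAddMonoidHom φ = 0 ↔ φ = 0 := by
    rw [AddChar.eq_zero_iff, DFunLike.ext_iff]
    simp only [AddChar.compAddMonoidHom_apply, signChar_eq_one_iff, AddMonoidHom.zero_apply]
  simpa only [hψ, AddChar.compAddMonoidHom_apply] using (signChar.compAddMonoidHom φ).sum_eq_ite

lemma sum_sum_signChar {G H : Type*} [AddCommGroup G] [Fintype G] [AddCommGroup H] [Fintype H]
    (ψ : G →+ H →+ ZMod 2) : ∑ g, ∑ h, signChar (ψ g h) = Nat.card ψ.ker * Nat.card H := by
  classical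
  simp_rw [sum_signChar_addMonoidHom, Finset.sum_ite, Finset.sum_const_zero, add_zero,
    Finset.sum_const, nsmul_eq_mul, Nat.card_eq_fintype_card, Fintype.card_subtype,
    AddMonoidHom.mem_ker]

lemma card_mul_card_ker_eq {G H : Type*} [AddCommGroup G] [Fintype G] [AddCommGroup H]
    [Fintype H] (ψ : G →+ H →+ ZMod 2) :
    Nat.card ψ.ker * Nat.card H = Nat.card ψ.flip.ker * Nat.card G := by
  have h := sum_sum_signChar ψ.flip
  rw [Finset.sum_comm] at h
  exact_mod_cast (sum_sum_signChar ψ).symm.trans h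

section Quadratic

variable {n m : ℕ} {F : Vec n → Vec m}

def polar (F : Vec n → Vec m) (x y : Vec n) : Vec m := F (x + y) + F x + F y + F 0

lemma polar_comm (F : Vec n → Vec m) (x y : Vec n) : polar F x y = polar F y x := by
  unfold polar; rw [add_comm x y]; abel

lemma polar_add_left (hq : IsQuadratic F) (x x' y : Vec n) :
    polar F (x + x') y = polar F x y + polar F x' y := by
  obtain ⟨c, hc⟩ := hq x x'
  have h₁ := hc y
  have h₀ := hc 0
  rw [show y + x + x' = x + x' + y by abel, add_comm y x, add_comm y x'] at h₁
  simp only [zero_add] at h₀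
  have two : (2 : Vec m) = 0 := by ext; rfl
  unfold polar
  linear_combination h₁ - h₀ + (F (x + x') - F (x + y) - F (x' + y) - F y) * two

lemma polar_add_right (hq : IsQuadratic F) (x y y' : Vec n) :
    polar F x (y + y') = polar F x y + polar F x y' := by
  rw [polar_comm, polar_add_left hq, polar_comm F y, polar_comm F y']

def polarForm (hq : IsQuadratic F) (b : Vec m) : Vec n →+ Vec n →+ ZMod 2 :=
  AddMonoidHom.mk'
    (fun y => AddMonoidHom.mk' (fun x => b ⬝ᵥ polar F x y) fun x x' => by
      rw [polar_add_left hq, dotProduct_add])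
    fun y y' => by ext x; simp [polar_add_right hq, dotProduct_add]

@[simp] lemma polarForm_apply (hq : IsQuadratic F) (b : Vec m) (y x : Vec n) :
    polarForm hq b y x = b ⬝ᵥ polar F x y := rfl

/-- The linear space `{u | D_u F_b is constant}` of the component `F_b`; its dimension is the
parameter `l_b` of the paper. -/
def polarRadical (hq : IsQuadratic F) (b : Vec m) : Submodule (ZMod 2) (Vec n) :=
  AddSubgroup.toZModSubmodule 2 (polarForm hq b).ker

lemma mem_polarRadical {hq : IsQuadratic F} {b : Vec m} {y : Vec n} :
    y ∈ polarRadical hq b ↔ ∀ x, b ⬝ᵥ polar F x y = 0 := by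
  simp [polarRadical, DFunLike.ext_iff]

lemma walsh_sq_eq_sum (hq : IsQuadratic F) (b : Vec m) (a : Vec n) :
    Walsh F b a ^ 2 = ∑ u, signChar (b ⬝ᵥ F u + b ⬝ᵥ F 0 + a ⬝ᵥ u) *
      ∑ x, signChar (polarForm hq b u x) := by
  have two : (2 : ZMod 2) = 0 := rfl
  let s x := signChar (b ⬝ᵥ F x + a ⬝ᵥ x)
  calc Walsh F b a ^ 2
      = ∑ x, ∑ y, s x * s y := by rw [sq, ← Finset.sum_mul_sum]; rfl
    _ = ∑ x, ∑ u, signChar (b ⬝ᵥ F u + b ⬝ᵥ F 0 + a ⬝ᵥ u) * signChar (polarForm hq b u x) :=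
      Finset.sum_congr rfl fun x _ => .symm <| Fintype.sum_equiv (Equiv.addLeft x) _ _ fun u => by
        simp only [s, Equiv.coe_addLeft, polarForm_apply, polar, ← AddChar.map_add_eq_mul,
          dotProduct_add]
        congr 1
        linear_combination (b ⬝ᵥ F u + b ⬝ᵥ F 0 - a ⬝ᵥ x) * two
    _ = _ := by rw [Finset.sum_comm]; simp_rw [Finset.mul_sum]

lemma walsh_sq_eq_zero_or_eq_pow (hq : IsQuadratic F) (b : Vec m) (a : Vec n) :
    Walsh F b a ^ 2 = 0 ∨
      Walsh F b a ^ 2 = 2 ^ (n + Module.finrank (ZMod 2) (polarRadical hq b)) := by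
  classical
  have two : (2 : ZMod 2) = 0 := rfl
  set R := polarRadical hq b
  let φ : R →+ ZMod 2 := AddMonoidHom.mk' (fun u => b ⬝ᵥ F u + b ⬝ᵥ F 0 + a ⬝ᵥ u) fun u v => by
    have h := mem_polarRadical.1 v.2 u
    simp only [polar, dotProduct_add, Submodule.coe_add] at h ⊢
    linear_combination h - (b ⬝ᵥ F u + b ⬝ᵥ F v + b ⬝ᵥ F 0) * two
  have hW : Walsh F b a ^ 2 = 2 ^ n * ∑ u : R, signChar (φ u) := by
    rw [walsh_sq_eq_sum hq, Finset.mul_sum]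
    simp_rw [sum_signChar_addMonoidHom, mul_ite, mul_zero]
    rw [← Finset.sum_filter]
    refine Finset.sum_subtype _ (fun u => ?_) _ |>.trans (Finset.sum_congr rfl fun u _ => ?_)
    · simp [R, polarRadical]
    · simp [φ, mul_comm]
  rw [hW, sum_signChar_addMonoidHom]
  split_ifs
  · right
    rw [Module.card_eq_pow_finrank (K := ZMod 2), ZMod.card, pow_add]
    push_cast; rfl
  · left; simp

lemma walsh_sq_le_pow (hq : IsQuadratic F) (b : Vec m) (a : Vec n) :
    Walsh F b a ^ 2 ≤ 2 ^ (n + Module.finrank (ZMod 2) (polarRadical hq b)) := by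
  rcases walsh_sq_eq_zero_or_eq_pow hq b a with h | h <;> rw [h]
  positivity

lemma finrank_polarRadical_eq_of_walsh_sq_eq (hq : IsQuadratic F) {b : Vec m} {a : Vec n}
    {j : ℕ} (h : Walsh F b a ^ 2 = 2 ^ (n + j)) :
    Module.finrank (ZMod 2) (polarRadical hq b) = j := by
  rcases walsh_sq_eq_zero_or_eq_pow hq b a with h' | h'
  · exact absurd (h.symm.trans h') (by positivity)
  · have := (pow_right_inj₀ two_pos (by norm_num)).1 (h.symm.trans h')
    omega

lemma lt_finrank_polarRadical_of_pow_lt_walsh_sq (hq : IsQuadratic F) {b : Vec m} {a : Vec n}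
    {j : ℕ} (h : 2 ^ j < Walsh F b a ^ 2) :
    j < n + Module.finrank (ZMod 2) (polarRadical hq b) :=
  (pow_lt_pow_iff_right₀ one_lt_two).1 (h.trans_le (walsh_sq_le_pow hq b a))

end Quadratic

section APN

variable {n : ℕ} {F : Vec n → Vec n}

lemma card_polar_eq_zero_le (ha : IsAPN F) {u : Vec n} (hu : u ≠ 0) :
    Nat.card {x // polar F x u = 0} ≤ 2 := by
  have h : ∀ x, polar F x u = 0 ↔ F x + F (x + u) = F 0 + F u := fun x => by
    rw [show polar F x u = (F x + F (x + u)) + (F 0 + F u) by unfold polar; abel,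
      add_eq_zero_iff_eq_neg, ZModModule.neg_eq_self]
  simpa only [h] using ha u hu (F 0 + F u)

lemma card_polarRadical_mem_le (hq : IsQuadratic F) (ha : IsAPN F)
    {u : Vec n} (hu : u ≠ 0) : Nat.card {b // u ∈ polarRadical hq b} ≤ 2 := by
  let ψ : Vec n →+ Vec n →+ ZMod 2 :=
    AddMonoidHom.mk' (fun b => polarForm hq b u) fun b b' => by ext x; simp [add_dotProduct]
  have hker : Nat.card ψ.ker = Nat.card {b // u ∈ polarRadical hq b} :=
    Nat.card_congr <| Equiv.subtypeEquivRight fun b => by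
      simp [ψ, mem_polarRadical, DFunLike.ext_iff]
  have hflip : Nat.card ψ.flip.ker = Nat.card {x // polar F x u = 0} :=
    Nat.card_congr <| Equiv.subtypeEquivRight fun x => by
      simp [ψ, DFunLike.ext_iff, dotProduct_comm _ (polar F x u), dotProduct_eq_zero_iff]
  have h := card_mul_card_ker_eq ψ
  rw [hker, hflip, Nat.mul_right_cancel_iff Nat.card_pos] at h
  exact h ▸ card_polar_eq_zero_le ha hu

lemma polarRadical_inf_eq_bot (hq : IsQuadratic F) (ha : IsAPN F) {b₁ b₂ : Vec n}
    (h₁ : b₁ ≠ 0) (h₂ : b₂ ≠ 0) (h : b₁ ≠ b₂) :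
    polarRadical hq b₁ ⊓ polarRadical hq b₂ = ⊥ := by
  refine eq_bot_iff.2 fun u ⟨hu₁, hu₂⟩ => (Submodule.mem_bot _).2 <| by_contra fun hu => ?_
  have hsub : ({0, b₁, b₂} : Set (Vec n)) ⊆ {b | u ∈ polarRadical hq b} := by
    rintro b (rfl | rfl | rfl)
    · simp [mem_polarRadical]
    · exact hu₁
    · exact hu₂
  have hthree : ({0, b₁, b₂} : Set (Vec n)).ncard = 3 :=
    Set.ncard_eq_three.2 ⟨0, b₁, b₂, h₁.symm, h₂.symm, h, rfl⟩
  have hle := card_polarRadical_mem_le hq ha hu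
  rw [← Set.coe_ofPred, Nat.card_coe_set_eq] at hle
  have := Set.ncard_le_ncard hsub
  omega

lemma finrank_polarRadical_add_le (hq : IsQuadratic F) (ha : IsAPN F) {b₁ b₂ : Vec n}
    (h₁ : b₁ ≠ 0) (h₂ : b₂ ≠ 0) (h : b₁ ≠ b₂) :
    Module.finrank (ZMod 2) (polarRadical hq b₁) + Module.finrank (ZMod 2) (polarRadical hq b₂)
      ≤ n := by
  rw [← Submodule.finrank_sup_add_finrank_inf_eq, polarRadical_inf_eq_bot hq ha h₁ h₂ h,
    finrank_bot, add_zero]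
  exact (Submodule.finrank_le _).trans (Module.finrank_fin_fun _).le

end APN

end QuadraticAPN

theorem stmt_8_general {n : ℕ} (F : Vec n → Vec n) (hq : IsQuadratic F)
    (ha : IsAPN F) (l : ℕ) (hl : n / 2 < l)
    (hlin : (∀ b : Vec n, b ≠ 0 → ∀ a, (Walsh F b a) ^ 2 ≤ 2 ^ (n + l)) ∧
      ∃ b : Vec n, b ≠ 0 ∧ ∃ a, (Walsh F b a) ^ 2 = 2 ^ (n + l)) :
    (∃! b : {b : Vec n // b ≠ 0}, ∃ a, (Walsh F b.1 a) ^ 2 = 2 ^ (n + l)) ∧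
    (∀ b : Vec n, b ≠ 0 → (¬ ∃ a, (Walsh F b a) ^ 2 = 2 ^ (n + l)) →
      ∀ a, (Walsh F b a) ^ 2 ≤ 2 ^ (2 * n - l)) ∧
    (∀ b₁ b₂ : Vec n, b₁ ≠ 0 → b₂ ≠ 0 →
      (∃ a, (2 : ℤ) ^ (3 * n / 2) < (Walsh F b₁ a) ^ 2) →
      (∃ a, (2 : ℤ) ^ (3 * n / 2) < (Walsh F b₂ a) ^ 2) → b₁ = b₂) := by
  obtain ⟨-, b₀, hb₀, a₀, ha₀⟩ := hlin
  have hk₀ := QuadraticAPN.finrank_polarRadical_eq_of_walsh_sq_eq hq ha₀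
  refine ⟨⟨⟨b₀, hb₀⟩, ⟨a₀, ha₀⟩, fun ⟨b, hb⟩ ⟨a, (h : Walsh F b a ^ 2 = _)⟩ => Subtype.ext ?_⟩,
    fun b hb hnot a => ?_, fun b₁ b₂ h₁ h₂ ⟨a₁, hw₁⟩ ⟨a₂, hw₂⟩ => ?_⟩
  · by_contra hne
    have := QuadraticAPN.finrank_polarRadical_add_le hq ha hb hb₀ hne
    have := QuadraticAPN.finrank_polarRadical_eq_of_walsh_sq_eq hq h
    omega
  · have hne : b ≠ b₀ := by rintro rfl; exact hnot ⟨a₀, ha₀⟩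
    have := QuadraticAPN.finrank_polarRadical_add_le hq ha hb hb₀ hne
    exact (QuadraticAPN.walsh_sq_le_pow hq b a).trans (pow_le_pow_right₀ one_le_two (by omega))
  · by_contra hne
    have := QuadraticAPN.finrank_polarRadical_add_le hq ha h₁ h₂ hne
    have := QuadraticAPN.lt_finrank_polarRadical_of_pow_lt_walsh_sq hq hw₁
    have := QuadraticAPN.lt_finrank_polarRadical_of_pow_lt_walsh_sq hq hw₂
    omega

theorem stmt_8 {n : ℕ} (hn : Even n) (F : Vec n → Vec n) (hq : IsQuadratic F)
    (ha : IsAPN F) (l : ℕ) (hl : n / 2 < l)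
    (hlin : (∀ b : Vec n, b ≠ 0 → ∀ a, (Walsh F b a) ^ 2 ≤ 2 ^ (n + l)) ∧
      ∃ b : Vec n, b ≠ 0 ∧ ∃ a, (Walsh F b a) ^ 2 = 2 ^ (n + l)) :
    (∃! b : {b : Vec n // b ≠ 0}, ∃ a, (Walsh F b.1 a) ^ 2 = 2 ^ (n + l)) ∧
    (∀ b : Vec n, b ≠ 0 → (¬ ∃ a, (Walsh F b a) ^ 2 = 2 ^ (n + l)) →
      ∀ a, (Walsh F b a) ^ 2 ≤ 2 ^ (2 * n - l)) ∧
    (∀ b₁ b₂ : Vec n, b₁ ≠ 0 → b₂ ≠ 0 →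
      (∃ a, (2 : ℤ) ^ (3 * n / 2) < (Walsh F b₁ a) ^ 2) →
      (∃ a, (2 : ℤ) ^ (3 * n / 2) < (Walsh F b₂ a) ^ 2) → b₁ = b₂) :=
  stmt_8_general F hq ha l hl hlin
end

section
/- Let 𝒱 be a vector space partition of F_2^8 such that every member has even dimension. Then the multiset of dimensions of 𝒱 is one of: {8}, {6 together with 64 copies of 2}, or {5i copies of 2 together with 17−i copies of 4} for some 0 ≤ i ≤ 17. -/
/-! Counting nonzero vectors gives `∑ (2 ^ dᵢ - 1) = 255`, and distinct members meet trivially, so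
`dᵢ + dⱼ ≤ 8`. With all `dᵢ` even: an 8 leaves room for nothing else; a 6 forces all other members
to be planes, and `63 + 3k = 255` gives `k = 64`; otherwise only 2s and 4s occur, say `a` and `b` of
them, and `3a + 15b = 255` forces `a = 5 (17 - b)`. -/

open Finset

open Module

section VectorSpacePartition

variable {K : Type} [Field K] {n : ℕ} {𝒱 : Finset (Submodule K (Fin n → K))}

theorem IsVSP.inf_eq_bot (h : IsVSP 𝒱) {S T : Submodule K (Fin n → K)} (hS : S ∈ 𝒱) (hT : T ∈ 𝒱)
    (hST : S ≠ T) : S ⊓ T = ⊥ := by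
  refine eq_bot_iff.2 fun x ⟨hxS, hxT⟩ => (Submodule.mem_bot K).2 ?_
  by_contra hx
  exact hST ((h.2 x hx).unique ⟨hS, hxS⟩ ⟨hT, hxT⟩)

theorem IsVSP.finrank_add_finrank_le (h : IsVSP 𝒱) {S T : Submodule K (Fin n → K)} (hS : S ∈ 𝒱)
    (hT : T ∈ 𝒱) (hST : S ≠ T) : finrank K S + finrank K T ≤ n := by
  have hsup := Submodule.finrank_sup_add_finrank_inf_eq S T
  rw [h.inf_eq_bot hS hT hST, finrank_bot] at hsup
  have := Submodule.finrank_le (S ⊔ T)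
  rw [finrank_fin_fun] at this
  omega

theorem IsVSP.sum_card_pow_finrank_sub_one [Fintype K] (h : IsVSP 𝒱) :
    ∑ S ∈ 𝒱, (Fintype.card K ^ finrank K S - 1) = Fintype.card K ^ n - 1 := by
  classical
  let punctured (S : Submodule K (Fin n → K)) : Finset (Fin n → K) := (S : Set _).toFinset.erase 0
  have hcover : univ.erase 0 = 𝒱.biUnion punctured := by
    ext x
    simp only [mem_erase, mem_univ, and_true, mem_biUnion, punctured, Set.mem_toFinset,
      SetLike.mem_coe]
    refine ⟨fun hx => ?_, fun ⟨_, _, hx, _⟩ => hx⟩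
    obtain ⟨S, ⟨hS, hxS⟩, -⟩ := h.2 x hx
    exact ⟨S, hS, hx, hxS⟩
  have hdisj : (𝒱 : Set (Submodule K (Fin n → K))).PairwiseDisjoint punctured := by
    intro S hS T hT hST
    refine disjoint_left.2 fun x hxS hxT => ?_
    simp only [punctured, mem_erase, Set.mem_toFinset, SetLike.mem_coe] at hxS hxT
    exact hxS.1 ((Submodule.mem_bot K).1 (h.inf_eq_bot hS hT hST ▸ ⟨hxS.2, hxT.2⟩))
  have hcard (S : Submodule K (Fin n → K)) : #(punctured S) = Fintype.card K ^ finrank K S - 1 := by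
    rw [card_erase_of_mem (by simp [S.zero_mem]), Set.toFinset_card, ← Nat.card_eq_fintype_card,
      SetLike.coe_sort_coe, Nat.card_eq_fintype_card, card_eq_pow_finrank (K := K) (V := S)]
  calc ∑ S ∈ 𝒱, (Fintype.card K ^ finrank K S - 1) = #(𝒱.biUnion punctured) := by
        rw [card_biUnion hdisj]
        exact sum_congr rfl fun S _ => (hcard S).symm
    _ = Fintype.card K ^ n - 1 := by
        rw [← hcover, card_erase_of_mem (mem_univ 0), card_univ, Fintype.card_fun, Fintype.card_fin]

end VectorSpacePartition

namespace Multiset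

theorem le_of_mem_of_sum_two_pow_sub_one_eq {M : Multiset ℕ} {n d : ℕ}
    (hsum : (M.map fun e => 2 ^ e - 1).sum = 2 ^ n - 1) (hd : d ∈ M) : d ≤ n := by
  have := hsum ▸ le_sum_of_mem (mem_map_of_mem (fun e => 2 ^ e - 1) hd)
  have : 2 ^ d ≤ 2 ^ n := by
    have := Nat.one_le_two_pow (n := d); have := Nat.one_le_two_pow (n := n); omega
  exact (Nat.pow_le_pow_iff_right (by norm_num)).1 this

theorem eq_singleton_of_mem_of_add_le {M : Multiset ℕ} {n : ℕ} (hpos : ∀ d ∈ M, 0 < d)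
    (hpair : ∀ d ∈ M, ∀ e ∈ M.erase d, d + e ≤ n) (hn : n ∈ M) : M = {n} := by
  obtain ⟨R, rfl⟩ := exists_cons_of_mem hn
  rw [eq_zero_of_forall_notMem (s := R) fun e he => ?_]
  · rfl
  have := hpair n hn e (by simpa using he)
  have := hpos e (mem_cons_of_mem he)
  omega

theorem eq_replicate_two_add_six {M : Multiset ℕ} (hev : ∀ d ∈ M, 0 < d ∧ Even d)
    (hpair : ∀ d ∈ M, ∀ e ∈ M.erase d, d + e ≤ 8)
    (hsum : (M.map fun d => 2 ^ d - 1).sum = 255) (h6 : 6 ∈ M) :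
    M = replicate 64 2 + {6} := by
  obtain ⟨R, rfl⟩ := exists_cons_of_mem h6
  have hR : R = replicate (card R) 2 := eq_replicate_of_mem fun e he => by
    obtain ⟨hpos, k, hk⟩ := hev e (mem_cons_of_mem he)
    have := hpair 6 h6 e (by simpa using he)
    omega
  rw [hR] at hsum ⊢
  simp only [map_cons, map_replicate, sum_cons, sum_replicate, smul_eq_mul] at hsum
  rw [show card R = 64 by omega, add_comm, singleton_add]

theorem eq_replicate_two_add_replicate_four {M : Multiset ℕ} (h24 : ∀ d ∈ M, d = 2 ∨ d = 4)
    (hsum : (M.map fun d => 2 ^ d - 1).sum = 255) :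
    ∃ i ≤ 17, M = replicate (5 * i) 2 + replicate (17 - i) 4 := by
  have hM : M = replicate (count 2 M) 2 + replicate (count 4 M) 4 := by
    rw [← filter_eq', ← filter_eq']
    conv_lhs => rw [← filter_add_not (· = 2) M]
    exact congrArg _ (filter_congr fun d hd => by rcases h24 d hd with rfl | rfl <;> simp)
  generalize count 2 M = a, count 4 M = b at hM
  subst hM
  simp only [map_add, map_replicate, sum_add, sum_replicate, smul_eq_mul] at hsum
  refine ⟨17 - b, by omega, ?_⟩
  rw [show 5 * (17 - b) = a by omega, show 17 - (17 - b) = b by omega]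

theorem even_packing_classification {M : Multiset ℕ} (hev : ∀ d ∈ M, 0 < d ∧ Even d)
    (hpair : ∀ d ∈ M, ∀ e ∈ M.erase d, d + e ≤ 8)
    (hsum : (M.map fun d => 2 ^ d - 1).sum = 255) :
    M = {8} ∨ M = replicate 64 2 + {6} ∨
      ∃ i ≤ 17, M = replicate (5 * i) 2 + replicate (17 - i) 4 := by
  by_cases h8 : 8 ∈ M
  · exact Or.inl (eq_singleton_of_mem_of_add_le (fun d hd => (hev d hd).1) hpair h8)
  by_cases h6 : 6 ∈ M
  · exact Or.inr (Or.inl (eq_replicate_two_add_six hev hpair hsum h6))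
  refine Or.inr (Or.inr (eq_replicate_two_add_replicate_four (fun d hd => ?_) hsum))
  obtain ⟨hpos, k, hk⟩ := hev d hd
  have := le_of_mem_of_sum_two_pow_sub_one_eq (n := 8) hsum hd
  have : d ≠ 8 := fun h => h8 (h ▸ hd)
  have : d ≠ 6 := fun h => h6 (h ▸ hd)
  omega

end Multiset

theorem stmt_10 (𝒱 : Finset (Submodule (ZMod 2) (Fin 8 → ZMod 2)))
    (h : IsVSP 𝒱) (heven : ∀ S ∈ 𝒱, Even (Module.finrank (ZMod 2) S)) :
    𝒱.val.map (fun S : Submodule (ZMod 2) (Fin 8 → ZMod 2) => Module.finrank (ZMod 2) S) = ({8} : Multiset ℕ) ∨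
    𝒱.val.map (fun S : Submodule (ZMod 2) (Fin 8 → ZMod 2) => Module.finrank (ZMod 2) S) =
      Multiset.replicate 64 2 + {6} ∨
    ∃ i ≤ 17, 𝒱.val.map (fun S : Submodule (ZMod 2) (Fin 8 → ZMod 2) => Module.finrank (ZMod 2) S) =
      Multiset.replicate (5 * i) 2 + Multiset.replicate (17 - i) 4 := by
  classical
  refine Multiset.even_packing_classification (fun d hd => ?_) (fun d hd e he => ?_) ?_
  · obtain ⟨S, hS, rfl⟩ := Multiset.mem_map.1 hd
    exact ⟨Submodule.one_le_finrank_iff.2 (h.1 S hS), heven S hS⟩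
  · obtain ⟨S, hS, rfl⟩ := Multiset.mem_map.1 hd
    rw [← Multiset.map_erase_of_mem _ _ hS] at he
    obtain ⟨T, hT, rfl⟩ := Multiset.mem_map.1 he
    obtain ⟨hTS, hT⟩ := 𝒱.nodup.mem_erase_iff.1 hT
    exact h.finrank_add_finrank_le hS hT hTS.symm
  · simpa [Multiset.map_map, ← Finset.sum_eq_multiset_sum, ZMod.card] using
      h.sum_card_pow_finrank_sub_one
end

section
/- Let s divide n − s and identify F_2^n with F_{2^{n−s}} × F_{2^s}. Let U_∞ = F_{2^{n−s}} × {0} and for each α ∈ F_{2^{n−s}} let U_α = {(αx, x) : x ∈ F_{2^s}} (using an F_{2^s}-module structure on F_{2^{n−s}}). Then {U_∞} ∪ {U_α : α ∈ F_{2^{n−s}}} is a vector space partition of F_2^n of type [s^{2^{n−s}}, (n−s)^1], i.e., consisting of 2^{n−s} subspaces of dimension s and one subspace of dimension n−s. -/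
/-! `U_∞` is the image of the first factor and `U_α` is the image of `x ↦ (α φ(x), x)`, both
injective `𝔽₂`-linear maps, so their sizes are those of the factors. A nonzero `(y, x)` with
`x ≠ 0` lies in `U_α` exactly for `α = y / φ(x)`; with `x = 0` it lies in no `U_α`. -/

open Finset

section

variable {R M N : Type*} [Semiring R] [AddCommMonoid M] [AddCommMonoid N] [Module R M]
  [Module R N]

theorem LinearMap.natCard_range_of_injective {f : N →ₗ[R] M} (hf : Function.Injective f) :
    Nat.card (LinearMap.range f) = Nat.card N :=
  Nat.card_congr (LinearEquiv.ofInjective f hf).toEquiv.symm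

theorem LinearMap.coe_range_inl :
    (LinearMap.range (LinearMap.inl R M N) : Set (M × N)) = {q | q.2 = 0} := by
  ext q
  simp [LinearMap.range_inl]

theorem LinearMap.coe_range_prod_id (f : N →ₗ[R] M) :
    (LinearMap.range (f.prod LinearMap.id) : Set (M × N)) = {q | q.1 = f q.2} := by
  ext ⟨x, y⟩
  simp [eq_comm]

end

theorem eq_mul_or_existsUnique_eq_mul {K L : Type*} [DivisionRing K] [DivisionRing L]
    (φ : K →+* L) {p : L × K} (hp : p ≠ 0) :
    (p.2 = 0 ∧ ∀ α, p.1 ≠ α * φ p.2) ∨ (p.2 ≠ 0 ∧ ∃! α, p.1 = α * φ p.2) := by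
  by_cases h2 : p.2 = 0
  · refine .inl ⟨h2, fun α h1 => hp (Prod.ext ?_ h2)⟩
    simpa [h2] using h1
  · have hφ : φ p.2 ≠ 0 := (map_ne_zero φ).2 h2
    exact .inr ⟨h2, p.1 * (φ p.2)⁻¹, by simp [hφ], fun α hα => by simp [hα, hφ]⟩

theorem stmt_13_general {n s : ℕ} (hs : 0 < s) (hsn : s < n)
    (φ : GaloisField 2 s →+* GaloisField 2 (n - s)) :
    (∀ p : GaloisField 2 (n - s) × GaloisField 2 s, p ≠ 0 →
      ((p ∈ ({q : GaloisField 2 (n - s) × GaloisField 2 s | q.2 = 0}) ∧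
        ∀ α : GaloisField 2 (n - s),
          p ∉ {q : GaloisField 2 (n - s) × GaloisField 2 s | q.1 = α * φ q.2}) ∨
       (p ∉ ({q : GaloisField 2 (n - s) × GaloisField 2 s | q.2 = 0}) ∧
        ∃! α : GaloisField 2 (n - s),
          p ∈ {q : GaloisField 2 (n - s) × GaloisField 2 s | q.1 = α * φ q.2}))) ∧
    (∃ S : Submodule (ZMod 2) (GaloisField 2 (n - s) × GaloisField 2 s),
      (S : Set (GaloisField 2 (n - s) × GaloisField 2 s)) =
        {q | q.2 = 0} ∧ Nat.card S = 2 ^ (n - s)) ∧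
    (∀ α : GaloisField 2 (n - s),
      ∃ S : Submodule (ZMod 2) (GaloisField 2 (n - s) × GaloisField 2 s),
        (S : Set (GaloisField 2 (n - s) × GaloisField 2 s)) =
          {q | q.1 = α * φ q.2} ∧ Nat.card S = 2 ^ s) := by
  refine ⟨fun p hp => ?_, ⟨_, LinearMap.coe_range_inl, ?_⟩, fun α => ?_⟩
  · simpa using eq_mul_or_existsUnique_eq_mul φ hp
  · rw [LinearMap.natCard_range_of_injective LinearMap.inl_injective,
      GaloisField.card 2 _ (Nat.sub_ne_zero_of_lt hsn)]
  · let f := ((AddMonoidHom.mulLeft α).comp φ.toAddMonoidHom).toZModLinearMap 2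
    refine ⟨_, LinearMap.coe_range_prod_id f, ?_⟩
    rw [LinearMap.natCard_range_of_injective fun _ _ h => congrArg Prod.snd h,
      GaloisField.card 2 s hs.ne']

theorem stmt_13 {n s : ℕ} (hs : 0 < s) (hsn : s < n) (hdvd : s ∣ (n - s))
    (φ : GaloisField 2 s →+* GaloisField 2 (n - s)) :
    (∀ p : GaloisField 2 (n - s) × GaloisField 2 s, p ≠ 0 →
      ((p ∈ ({q : GaloisField 2 (n - s) × GaloisField 2 s | q.2 = 0}) ∧
        ∀ α : GaloisField 2 (n - s),
          p ∉ {q : GaloisField 2 (n - s) × GaloisField 2 s | q.1 = α * φ q.2}) ∨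
       (p ∉ ({q : GaloisField 2 (n - s) × GaloisField 2 s | q.2 = 0}) ∧
        ∃! α : GaloisField 2 (n - s),
          p ∈ {q : GaloisField 2 (n - s) × GaloisField 2 s | q.1 = α * φ q.2}))) ∧
    (∃ S : Submodule (ZMod 2) (GaloisField 2 (n - s) × GaloisField 2 s),
      (S : Set (GaloisField 2 (n - s) × GaloisField 2 s)) =
        {q | q.2 = 0} ∧ Nat.card S = 2 ^ (n - s)) ∧
    (∀ α : GaloisField 2 (n - s),
      ∃ S : Submodule (ZMod 2) (GaloisField 2 (n - s) × GaloisField 2 s),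
        (S : Set (GaloisField 2 (n - s) × GaloisField 2 s)) =
          {q | q.1 = α * φ q.2} ∧ Nat.card S = 2 ^ s) :=
  stmt_13_general hs hsn φ
end

section
/- Let B be a blocking set of PG(m,2) with respect to k-spaces such that B intersects every k-space in an odd number of points. If |B| ≤ 2^{m−k+2} − 2, then B is a minimal blocking set, i.e., no proper subset of B is a blocking set with respect to k-spaces. -/
open Finset

/-!
Fix `x ∈ B`. Starting from `span {x}`, we grow a subspace `S` with `B ∩ S = {x}` one dimension at a
time up to dimension `k + 1`. The resulting `k`-space meets `B` only in `x`, so no subset of `B`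
missing `x` blocks it.

`S` can be enlarged to `S + ⟨y⟩` as soon as the nonzero class `y + S` contains no point of `B`.
Suppose every nonzero class of `V ⧸ S` meets `B`, where `dim V = m + 1`. If `dim S < k`, there are at
least `2 ^ (m - k + 2) - 1` such classes. If `dim S = k`, each `S + ⟨y⟩` is a `k`-space, so it meets
`B` in an odd number of points, one of which is `x`; hence each of the `2 ^ (m - k + 1) - 1` classes
meets `B` in an even, so at least two, number of points. Either way
`|B| ≥ 2 ^ (m - k + 2) - 1`, contradicting the size bound.
-/

open Module Submodule

theorem Set.mul_ncard_le_ncard_inter_preimage {α β : Type*} {f : α → β} {s : Set α}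
    {t : Set β} (hs : s.Finite) (ht : t.Finite) {c : ℕ}
    (h : ∀ b ∈ t, c ≤ (s ∩ f ⁻¹' {b}).ncard) : c * t.ncard ≤ (s ∩ f ⁻¹' t).ncard := by
  classical
  rw [ncard_eq_toFinset_card t ht, ncard_eq_toFinset_card _ (hs.inter_of_left _)]
  refine Finset.mul_card_image_le_card_of_maps_to (f := f) (by simp +contextual) c fun b hb => ?_
  convert h b (by simpa using hb) using 1
  rw [ncard_eq_toFinset_card _ (hs.inter_of_left _)]
  congr 1
  ext a
  aesop

section ZModTwo

variable {V : Type*} [AddCommGroup V] [Module (ZMod 2) V]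

theorem Submodule.mem_span_singleton_zmod_two_iff {w z : V} :
    z ∈ span (ZMod 2) {w} ↔ z = 0 ∨ z = w := by
  rw [mem_span_singleton]
  constructor
  · rintro ⟨c, rfl⟩
    obtain rfl | rfl : c = 0 ∨ c = 1 := by revert c; decide
    exacts [.inl (zero_smul _ _), .inr (one_smul _ _)]
  · rintro (rfl | rfl)
    exacts [⟨0, zero_smul _ _⟩, ⟨1, one_smul _ _⟩]

theorem Submodule.mem_comap_mkQ_span_singleton_zmod_two_iff (S : Submodule (ZMod 2) V)
    {w : V ⧸ S} {z : V} : z ∈ comap S.mkQ (span (ZMod 2) {w}) ↔ z ∈ S ∨ S.mkQ z = w := by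
  rw [mem_comap, mem_span_singleton_zmod_two_iff, mkQ_apply, Quotient.mk_eq_zero]

end ZModTwo

theorem Submodule.finrank_comap_mkQ_span_singleton {K V : Type*} [DivisionRing K]
    [AddCommGroup V] [Module K V] [Module.Finite K V] (S : Submodule K V) {w : V ⧸ S}
    (hw : w ≠ 0) : finrank K (comap S.mkQ (K ∙ w)) = finrank K S + 1 := by
  obtain ⟨y, rfl⟩ := S.mkQ_surjective w
  rw [← Set.image_singleton, ← map_span, comap_map_mkQ, finrank_sup_span_singleton]
  simpa [Quotient.mk_eq_zero] using hw

section IsolatingSubspace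

variable {V : Type*} [AddCommGroup V] [Module (ZMod 2) V] {B : Set V} {x : V}
  {S : Submodule (ZMod 2) V}

theorem inter_span_singleton_eq (h0 : 0 ∉ B) (hx : x ∈ B) : B ∩ span (ZMod 2) {x} = {x} := by
  ext z
  simp only [Set.mem_inter_iff, SetLike.mem_coe, mem_span_singleton_zmod_two_iff,
    Set.mem_singleton_iff]
  constructor
  · rintro ⟨hz, rfl | rfl⟩
    exacts [absurd hz h0, rfl]
  · rintro rfl
    exact ⟨hx, .inr rfl⟩

theorem inter_comap_mkQ_span_singleton_eq (hSB : B ∩ S = {x}) {w : V ⧸ S} :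
    B ∩ comap S.mkQ (span (ZMod 2) {w}) = insert x (B ∩ S.mkQ ⁻¹' {w}) := by
  rw [Set.insert_eq, ← hSB, ← Set.inter_union_distrib_left]
  congr 1
  ext z
  exact mem_comap_mkQ_span_singleton_zmod_two_iff S

variable [Finite V]

theorem even_ncard_inter_mkQ_preimage
    (hodd : ∀ T : Submodule (ZMod 2) V, finrank (ZMod 2) T = finrank (ZMod 2) S + 1 →
      Odd (B ∩ T).ncard)
    (hSB : B ∩ S = {x}) {w : V ⧸ S} (hw : w ≠ 0) : Even (B ∩ S.mkQ ⁻¹' {w}).ncard := by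
  have hx : x ∉ S.mkQ ⁻¹' {w} := by
    have : x ∈ S := (hSB.symm.subset rfl).2
    simpa [(Quotient.mk_eq_zero S).2 this, eq_comm] using hw
  have := hodd _ (finrank_comap_mkQ_span_singleton S hw)
  rwa [inter_comap_mkQ_span_singleton_eq hSB, Set.ncard_insert_of_notMem (fun h => hx h.2),
    Nat.odd_add_one, Nat.not_odd_iff_even] at this

theorem ncard_inter_mkQ_preimage_compl_zero_add_one (hSB : B ∩ S = {x}) :
    (B ∩ S.mkQ ⁻¹' {0}ᶜ).ncard + 1 = B.ncard := by
  have hker : S.mkQ ⁻¹' {0} = S := by ext; simp [Quotient.mk_eq_zero]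
  rw [Set.preimage_compl, hker, ← Set.sdiff_eq, ← Set.sdiff_self_inter, hSB]
  exact Set.ncard_sdiff_singleton_add_one (hSB.symm.subset rfl).1

theorem exists_ne_zero_forall_mkQ_ne {d : ℕ} (hd : d ≤ finrank (ZMod 2) V)
    (hodd : ∀ T : Submodule (ZMod 2) V, finrank (ZMod 2) T = d → Odd (B ∩ T).ncard)
    (hsize : B.ncard ≤ 2 ^ (finrank (ZMod 2) V - d + 2) - 2)
    (hSB : B ∩ S = {x}) (hS : finrank (ZMod 2) S < d) :
    ∃ w : V ⧸ S, w ≠ 0 ∧ ∀ z ∈ B, S.mkQ z ≠ w := by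
  by_contra! hhit
  have : Finite (V ⧸ S) := Finite.of_surjective _ S.mkQ_surjective
  have hrank := S.finrank_quotient_add_finrank
  have hS_le := S.finrank_le
  set n := finrank (ZMod 2) V
  set r := finrank (ZMod 2) S
  have hcompl : ({0}ᶜ : Set (V ⧸ S)).ncard = 2 ^ (n - r) - 1 := by
    rw [Set.ncard_compl, Set.ncard_singleton, natCard_eq_pow_finrank (K := ZMod 2), Nat.card_zmod]
    congr 2
    omega
  have hpos : ∀ w ∈ ({0}ᶜ : Set (V ⧸ S)), 1 ≤ (B ∩ S.mkQ ⁻¹' {w}).ncard := fun w hw => by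
    obtain ⟨z, hzB, hzw⟩ := hhit w hw
    exact (show (B ∩ S.mkQ ⁻¹' {w}).Nonempty from ⟨z, hzB, hzw⟩).ncard_pos
  have hlower : 2 ^ (n - d + 2) - 2 ≤ (B ∩ S.mkQ ⁻¹' {0}ᶜ).ncard := by
    rcases Nat.lt_or_eq_of_le (Nat.succ_le_of_lt hS) with hlt | heq
    · have h1 := Set.mul_ncard_le_ncard_inter_preimage (Set.toFinite B) (Set.toFinite _) hpos
      have h2 : 2 ^ (n - d + 2) ≤ 2 ^ (n - r) := Nat.pow_le_pow_right two_pos (by omega)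
      omega
    · have htwo : ∀ w ∈ ({0}ᶜ : Set (V ⧸ S)), 2 ≤ (B ∩ S.mkQ ⁻¹' {w}).ncard := fun w hw => by
        obtain ⟨j, hj⟩ := even_ncard_inter_mkQ_preimage (fun T hT => hodd T (hT.trans heq)) hSB hw
        have := hpos w hw
        omega
      have h1 := Set.mul_ncard_le_ncard_inter_preimage (Set.toFinite B) (Set.toFinite _) htwo
      have h2 : 2 ^ (n - d + 2) = 2 * 2 ^ (n - r) := by
        rw [← pow_succ']
        congr 1
        omega
      omega
  have := ncard_inter_mkQ_preimage_compl_zero_add_one hSB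
  omega

theorem exists_finrank_succ_inter_eq_singleton {d : ℕ} (hd : d ≤ finrank (ZMod 2) V)
    (hodd : ∀ T : Submodule (ZMod 2) V, finrank (ZMod 2) T = d → Odd (B ∩ T).ncard)
    (hsize : B.ncard ≤ 2 ^ (finrank (ZMod 2) V - d + 2) - 2)
    (hSB : B ∩ S = {x}) (hS : finrank (ZMod 2) S < d) :
    ∃ T : Submodule (ZMod 2) V, finrank (ZMod 2) T = finrank (ZMod 2) S + 1 ∧ B ∩ T = {x} := by
  obtain ⟨w, hw, hwB⟩ := exists_ne_zero_forall_mkQ_ne hd hodd hsize hSB hS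
  refine ⟨comap S.mkQ (span (ZMod 2) {w}), finrank_comap_mkQ_span_singleton S hw, ?_⟩
  have hfiber : B ∩ S.mkQ ⁻¹' {w} = ∅ :=
    Set.eq_empty_iff_forall_notMem.2 fun z hz => hwB z hz.1 hz.2
  rw [inter_comap_mkQ_span_singleton_eq hSB, hfiber, insert_empty_eq]

theorem exists_finrank_eq_inter_eq_singleton {d : ℕ} (hd0 : 0 < d) (hd : d ≤ finrank (ZMod 2) V)
    (h0 : 0 ∉ B)
    (hodd : ∀ T : Submodule (ZMod 2) V, finrank (ZMod 2) T = d → Odd (B ∩ T).ncard)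
    (hsize : B.ncard ≤ 2 ^ (finrank (ZMod 2) V - d + 2) - 2) (hx : x ∈ B) :
    ∃ S : Submodule (ZMod 2) V, finrank (ZMod 2) S = d ∧ B ∩ S = {x} := by
  suffices ∀ r, 0 < r → r ≤ d → ∃ S : Submodule (ZMod 2) V,
      finrank (ZMod 2) S = r ∧ B ∩ S = {x} from this d hd0 le_rfl
  intro r hr
  induction r, hr using Nat.le_induction with
  | base => exact fun _ =>
      ⟨_, finrank_span_singleton (ne_of_mem_of_not_mem hx h0), inter_span_singleton_eq h0 hx⟩
  | succ r _ ih =>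
    intro hrd
    obtain ⟨S, rfl, hSB⟩ := ih (by omega)
    exact exists_finrank_succ_inter_eq_singleton hd hodd hsize hSB (by omega)

end IsolatingSubspace

theorem stmt_15 {m k : ℕ} (hk : k ≤ m) (B : Set (Fin (m + 1) → ZMod 2))
    (hB : PGBlocking m k B)
    (hodd : ∀ S : Submodule (ZMod 2) (Fin (m + 1) → ZMod 2),
      Module.finrank (ZMod 2) S = k + 1 →
        Odd (Nat.card {x : Fin (m + 1) → ZMod 2 // x ∈ B ∧ x ∈ S}))
    (hsize : B.ncard ≤ 2 ^ (m - k + 2) - 2) :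
    ∀ B' ⊂ B, ¬ PGBlocking m k B' := by
  intro B' hB'B hB'
  obtain ⟨x, hxB, hxB'⟩ := Set.exists_of_ssubset hB'B
  obtain ⟨S, hS, hSB⟩ := exists_finrank_eq_inter_eq_singleton k.succ_pos (by simpa using hk)
    hB.1 hodd (by simpa using hsize) hxB
  obtain ⟨z, hzB', hzS⟩ := hB'.2 S hS
  obtain rfl : z = x := hSB.subset ⟨hB'B.subset hzB', hzS⟩
  exact hxB' hzB'
end

section
/- Let B be a blocking set of PG(m,2) with respect to k-spaces (1 ≤ k ≤ m−1). Then |B| ≥ 2^{m−k+1} − 1, with equality if and only if B is the point set of an (m−k)-space. -/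
open Finset

/-!
Lower bound: if some nonzero `p` lies outside `B`, the image of `B` in `V ⧸ ⟨p⟩` still avoids `0`
(because `⟨p⟩ = {0, p}` over `𝔽₂`) and blocks subspaces of one dimension less, since their
preimages are blocked by `B`; induct on the dimension. If no such `p` exists, `B` is all of
`V \ {0}`.

Equality: if `B ∪ {0}` were not closed under addition, take `x ≠ y` in `B` with `p = x + y ∉ B`.
The image of `B` in `V ⧸ ⟨p⟩` obeys the lower bound, which here equals `|B|`, so the quotient
map is injective on `B`; but it identifies `x` and `y`.
-/

open Module Submodule

def IsBlockingSet (K : Type*) {V : Type*} [DivisionRing K] [AddCommGroup V] [Module K V]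
    (d : ℕ) (B : Set V) : Prop :=
  0 ∉ B ∧ ∀ S : Submodule K V, finrank K S = d → ∃ x ∈ B, x ∈ S

lemma IsBlockingSet.pos {K V : Type*} [DivisionRing K] [AddCommGroup V] [Module K V]
    {d : ℕ} {B : Set V} (hB : IsBlockingSet K d B) : 0 < d := by
  rw [Nat.pos_iff_ne_zero]
  rintro rfl
  obtain ⟨x, hxB, hx⟩ := hB.2 ⊥ (finrank_bot K V)
  exact hB.1 ((mem_bot K).1 hx ▸ hxB)

lemma finrank_comap_mkQ {K V : Type*} [DivisionRing K] [AddCommGroup V] [Module K V]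
    [FiniteDimensional K V] (P : Submodule K V) (U : Submodule K (V ⧸ P)) :
    finrank K (U.comap P.mkQ) = finrank K U + finrank K P := by
  set S := U.comap P.mkQ
  let g : S →ₗ[K] V ⧸ P := P.mkQ ∘ₗ S.subtype
  have hrange : LinearMap.range g = U := by
    rw [LinearMap.range_comp, range_subtype, map_comap_eq_of_surjective P.mkQ_surjective]
  have hker : LinearMap.ker g = P.comap S.subtype := by
    rw [LinearMap.ker_comp, ker_mkQ]
  have hPS : P ≤ S := P.le_comap_mkQ U
  have := LinearMap.finrank_range_add_finrank_ker g
  rw [hrange, hker, LinearEquiv.finrank_eq (comapSubtypeEquivOfLe hPS)] at this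
  exact this.symm

variable {V : Type*} [AddCommGroup V] [Module (ZMod 2) V]

lemma mem_span_singleton_zmod_two {p x : V} : x ∈ (ZMod 2) ∙ p ↔ x = 0 ∨ x = p := by
  rw [mem_span_singleton]
  constructor
  · rintro ⟨c, rfl⟩
    rcases (show ∀ c : ZMod 2, c = 0 ∨ c = 1 by decide) c with rfl | rfl
    exacts [Or.inl (zero_smul _ p), Or.inr (one_smul _ p)]
  · rintro (rfl | rfl)
    exacts [⟨0, zero_smul _ _⟩, ⟨1, one_smul _ _⟩]

lemma coe_span_eq_insert_zero {B : Set V} (hB : ∀ x ∈ B, ∀ y ∈ B, x + y ∈ insert 0 B) :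
    (span (ZMod 2) B : Set V) = insert 0 B := by
  refine subset_antisymm (fun z hz => ?_) (Set.insert_subset (zero_mem _) subset_span)
  induction hz using span_induction with
  | mem x hx => exact Or.inr hx
  | zero => exact Or.inl rfl
  | add x y _ _ hx hy =>
    rcases hx with rfl | hx
    · rwa [zero_add]
    rcases hy with rfl | hy
    · rw [add_zero]; exact Or.inr hx
    exact hB x hx y hy
  | smul c x _ hx =>
    rcases mem_span_singleton_zmod_two.1 (smul_mem _ c (mem_span_singleton_self x)) with h | h
    · exact Or.inl h
    · rwa [h]

variable [Finite V]

lemma Submodule.ncard_diff_zero (S : Submodule (ZMod 2) V) :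
    ((S : Set V) \ {0}).ncard = 2 ^ finrank (ZMod 2) S - 1 := by
  rw [Set.ncard_sdiff_singleton_of_mem S.zero_mem, ← Nat.card_coe_set_eq, SetLike.coe_sort_coe,
    natCard_eq_pow_finrank (K := ZMod 2), Nat.card_zmod]

lemma IsBlockingSet.image_mkQ {d : ℕ} {B : Set V} (hB : IsBlockingSet (ZMod 2) (d + 1) B)
    {p : V} (hp0 : p ≠ 0) (hpB : p ∉ B) :
    IsBlockingSet (ZMod 2) d (((ZMod 2) ∙ p).mkQ '' B) := by
  refine ⟨?_, fun U hU => ?_⟩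
  · rintro ⟨x, hxB, hx0⟩
    rcases mem_span_singleton_zmod_two.1 ((Quotient.mk_eq_zero _).1 hx0) with rfl | rfl
    exacts [hB.1 hxB, hpB hxB]
  · obtain ⟨x, hxB, hxU⟩ :=
      hB.2 (U.comap _) (by rw [finrank_comap_mkQ, finrank_span_singleton hp0, hU])
    exact ⟨_, Set.mem_image_of_mem _ hxB, hxU⟩

lemma finrank_quotient_span_singleton {p : V} (hp0 : p ≠ 0) :
    finrank (ZMod 2) (V ⧸ (ZMod 2) ∙ p) = finrank (ZMod 2) V - 1 := by
  have := ((ZMod 2) ∙ p).finrank_quotient_add_finrank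
  rw [finrank_span_singleton hp0] at this
  omega

theorem IsBlockingSet.two_pow_le_ncard_add_one {d : ℕ} {B : Set V}
    (hB : IsBlockingSet (ZMod 2) d B) (hd : d ≤ finrank (ZMod 2) V) :
    2 ^ (finrank (ZMod 2) V - d + 1) ≤ B.ncard + 1 := by
  induction d generalizing V with
  | zero => exact absurd hB.pos (lt_irrefl 0)
  | succ d ih =>
    by_cases hsub : ∀ p : V, p ≠ 0 → p ∈ B
    · have hcard := Set.ncard_le_ncard
        (show ((⊤ : Submodule (ZMod 2) V) : Set V) \ {0} ⊆ B from fun p hp => hsub p hp.2)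
      rw [ncard_diff_zero, finrank_top] at hcard
      have : 2 ^ (finrank (ZMod 2) V - (d + 1) + 1) ≤ 2 ^ finrank (ZMod 2) V :=
        Nat.pow_le_pow_right two_pos (by omega)
      omega
    · push Not at hsub
      obtain ⟨p, hp0, hpB⟩ := hsub
      have : Finite (V ⧸ (ZMod 2) ∙ p) := Module.finite_of_finite (ZMod 2)
      have hrank := finrank_quotient_span_singleton hp0
      have hlow := ih (hB.image_mkQ hp0 hpB) (by omega)
      have himage := Set.ncard_image_le (f := ((ZMod 2) ∙ p).mkQ) (Set.toFinite B)
      rw [hrank, show finrank (ZMod 2) V - 1 - d + 1 = finrank (ZMod 2) V - (d + 1) + 1 by omega]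
        at hlow
      omega

lemma IsBlockingSet.add_mem_insert_zero {d : ℕ} {B : Set V} (hB : IsBlockingSet (ZMod 2) d B)
    (hd : d ≤ finrank (ZMod 2) V) (hcard : B.ncard + 1 = 2 ^ (finrank (ZMod 2) V - d + 1))
    {x y : V} (hx : x ∈ B) (hy : y ∈ B) : x + y ∈ insert 0 B := by
  obtain ⟨d, rfl⟩ : ∃ d', d = d' + 1 := Nat.exists_eq_add_one.2 hB.pos
  by_contra hxy
  rw [Set.mem_insert_iff, not_or] at hxy
  have : Finite (V ⧸ (ZMod 2) ∙ (x + y)) := Module.finite_of_finite (ZMod 2)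
  have hlow := (hB.image_mkQ hxy.1 hxy.2).two_pow_le_ncard_add_one
    (by rw [finrank_quotient_span_singleton hxy.1]; omega)
  rw [finrank_quotient_span_singleton hxy.1,
    show finrank (ZMod 2) V - 1 - d + 1 = finrank (ZMod 2) V - (d + 1) + 1 by omega] at hlow
  have hinj : Set.InjOn ((ZMod 2) ∙ (x + y)).mkQ B := Set.injOn_of_ncard_image_eq
    (le_antisymm (Set.ncard_image_le (Set.toFinite B)) (by omega))
  have hxy_eq : x = y := hinj hx hy <| (Submodule.Quotient.eq _).2 <| by
    rw [ZModModule.sub_eq_add]; exact mem_span_singleton_self _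
  exact hxy.1 (hxy_eq ▸ ZModModule.add_self x)

theorem IsBlockingSet.exists_eq_diff_zero {d : ℕ} {B : Set V} (hB : IsBlockingSet (ZMod 2) d B)
    (hd : d ≤ finrank (ZMod 2) V) (hcard : B.ncard + 1 = 2 ^ (finrank (ZMod 2) V - d + 1)) :
    ∃ S : Submodule (ZMod 2) V,
      finrank (ZMod 2) S = finrank (ZMod 2) V - d + 1 ∧ B = (S : Set V) \ {0} := by
  have hspan := coe_span_eq_insert_zero fun x hx y hy => hB.add_mem_insert_zero hd hcard hx hy
  have hB_eq : B = (span (ZMod 2) B : Set V) \ {0} := by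
    rw [hspan, Set.insert_sdiff_self_of_notMem hB.1]
  refine ⟨span (ZMod 2) B, Nat.pow_right_injective le_rfl ?_, hB_eq⟩
  have hspan_card := (span (ZMod 2) B).ncard_diff_zero
  rw [← hB_eq] at hspan_card
  have := Nat.one_le_two_pow (n := finrank (ZMod 2) (span (ZMod 2) B))
  dsimp only
  omega

theorem stmt_16_general {m k : ℕ} (hk2 : k + 1 ≤ m)
    (B : Set (Fin (m + 1) → ZMod 2)) (hB : PGBlocking m k B) :
    2 ^ (m - k + 1) - 1 ≤ B.ncard ∧
    (B.ncard = 2 ^ (m - k + 1) - 1 ↔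
      ∃ S : Submodule (ZMod 2) (Fin (m + 1) → ZMod 2),
        Module.finrank (ZMod 2) S = m - k + 1 ∧ B = (S : Set (Fin (m + 1) → ZMod 2)) \ {0}) := by
  have hB' : IsBlockingSet (ZMod 2) (k + 1) B := hB
  have hd : k + 1 ≤ finrank (ZMod 2) (Fin (m + 1) → ZMod 2) := by
    rw [finrank_fin_fun]; omega
  have hexp : finrank (ZMod 2) (Fin (m + 1) → ZMod 2) - (k + 1) + 1 = m - k + 1 := by
    rw [finrank_fin_fun]; omega
  have hlow := hB'.two_pow_le_ncard_add_one hd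
  rw [hexp] at hlow
  refine ⟨by omega, fun hcard => ?_, ?_⟩
  · rw [← hexp]
    exact hB'.exists_eq_diff_zero hd (by rw [hexp, hcard, Nat.sub_add_cancel Nat.one_le_two_pow])
  · rintro ⟨S, hS, rfl⟩
    rw [S.ncard_diff_zero, hS]

theorem stmt_16 {m k : ℕ} (hk1 : 1 ≤ k) (hk2 : k + 1 ≤ m)
    (B : Set (Fin (m + 1) → ZMod 2)) (hB : PGBlocking m k B) :
    2 ^ (m - k + 1) - 1 ≤ B.ncard ∧
    (B.ncard = 2 ^ (m - k + 1) - 1 ↔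
      ∃ S : Submodule (ZMod 2) (Fin (m + 1) → ZMod 2),
        Module.finrank (ZMod 2) S = m - k + 1 ∧ B = (S : Set (Fin (m + 1) → ZMod 2)) \ {0}) :=
  stmt_16_general hk2 B hB
end
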